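/- arXiv:2402.18810 — 6 statements merged into one kernel-verified Lean document; each statement's English description precedes it below -/
import Mathlib

section
/- For every nonempty set 𝒫 of probability measures on a measurable space (Ω, ℱ) and every probability measure Q on (Ω, ℱ), a numeraire exists: there is a Q-almost surely strictly positive e-variable X* such that ∫ (X/X*) dQ ≤ 1 for every e-variable X. -/
open MeasureTheory ENNReal Filter Set Topology

variable {Ω : Type*} [MeasurableSpace Ω]

/-- Ratio of extended nonnegative reals with the convention `∞/∞ = 1`
(and `x/∞ = 0`, `∞/x = ∞` for finite `x`). -/
noncomputable def ERatio (x y : ℝ≥0∞) : ℝ≥0∞ := if x = ⊤ ∧ y = ⊤ then 1 else x / y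

/-- `X` is an e-variable for the null hypothesis `Pfam`. -/
def IsEVar (Pfam : Set (Measure Ω)) (X : Ω → ℝ≥0∞) : Prop :=
  Measurable X ∧ ∀ P ∈ Pfam, ∫⁻ ω, X ω ∂P ≤ 1

/-- `Xs` is a numeraire for null `Pfam` and alternative `Q`. -/
def IsNumeraire (Pfam : Set (Measure Ω)) (Q : Measure Ω) (Xs : Ω → ℝ≥0∞) : Prop :=
  IsEVar Pfam Xs ∧ (∀ᵐ ω ∂Q, 0 < Xs ω) ∧
    ∀ X, IsEVar Pfam X → ∫⁻ ω, ERatio (X ω) (Xs ω) ∂Q ≤ 1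

set_option linter.unusedSectionVars false
set_option linter.unnecessarySimpa false
set_option maxHeartbeats 1000000

noncomputable section

section A

lemma ERatio_top_le_one (x : ℝ≥0∞) : ERatio x ⊤ ≤ 1 := by
  unfold ERatio
  split
  · exact le_rfl
  · simp [ENNReal.div_top]

lemma ERatio_of_ne_top {y : ℝ≥0∞} (hy : y ≠ ⊤) (x : ℝ≥0∞) : ERatio x y = x / y := by
  unfold ERatio; simp [hy]

lemma measurable_ERatio {X Y : Ω → ℝ≥0∞} (hX : Measurable X) (hY : Measurable Y) :
    Measurable fun ω => ERatio (X ω) (Y ω) := by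
  unfold ERatio
  have hs : MeasurableSet {ω | X ω = ⊤ ∧ Y ω = ⊤} :=
    ((hX (measurableSet_singleton ⊤)).inter (hY (measurableSet_singleton ⊤)))
  exact Measurable.ite hs measurable_const (hX.div hY)

/-- Midpoint closure of a set of functions. -/
inductive MidCl (G : Set (Ω → ℝ≥0∞)) : (Ω → ℝ≥0∞) → Prop
  | base {g} : g ∈ G → MidCl G g
  | mid {a b} : MidCl G a → MidCl G b → MidCl G (fun ω => (a ω + b ω) / 2)

lemma MidCl.mono {G G' : Set (Ω → ℝ≥0∞)} (h : G ⊆ G') {g} (hg : MidCl G g) : MidCl G' g := by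
  induction hg with
  | base hb => exact .base (h hb)
  | mid _ _ ha hb => exact .mid ha hb

lemma MidCl.measurable {G : Set (Ω → ℝ≥0∞)} (hG : ∀ g ∈ G, Measurable g) {g}
    (hg : MidCl G g) : Measurable g := by
  induction hg with
  | base hb => exact hG _ hb
  | mid _ _ ha hb =>
      have : Measurable fun ω => _ := (ha.add hb).mul_const (2 : ℝ≥0∞)⁻¹
      simpa [div_eq_mul_inv] using this

lemma lintegral_mid (μ : Measure Ω) {a b : Ω → ℝ≥0∞} (ha : Measurable a) (hb : Measurable b) :
    ∫⁻ ω, (a ω + b ω) / 2 ∂μ = (∫⁻ ω, a ω ∂μ + ∫⁻ ω, b ω ∂μ) / 2 := by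
  simp only [div_eq_mul_inv]
  rw [lintegral_mul_const (f := fun ω => a ω + b ω) _ (ha.add hb), lintegral_add_left ha]

lemma MidCl.isEVar {Pfam : Set (Measure Ω)} {G : Set (Ω → ℝ≥0∞)}
    (hG : ∀ g ∈ G, IsEVar Pfam g) {g} (hg : MidCl G g) : IsEVar Pfam g := by
  induction hg with
  | base hb => exact hG _ hb
  | mid _ _ ha hb =>
      refine ⟨?_, fun P hP => ?_⟩
      · have : Measurable fun ω => _ := (ha.1.add hb.1).mul_const (2 : ℝ≥0∞)⁻¹
        simpa [div_eq_mul_inv] using this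
      · rw [lintegral_mid P ha.1 hb.1]
        calc (∫⁻ ω, _ ∂P + ∫⁻ ω, _ ∂P) / 2 ≤ (1 + 1) / 2 := by
              gcongr
              exacts [ha.2 P hP, hb.2 P hP]
          _ = 1 := by
              rw [one_add_one_eq_two]
              exact ENNReal.div_self two_ne_zero ENNReal.ofNat_ne_top

lemma isEVar_one (Pfam : Set (Measure Ω)) (hprob : ∀ P ∈ Pfam, IsProbabilityMeasure P) :
    IsEVar Pfam (fun _ => 1) := by
  refine ⟨measurable_const, fun P hP => ?_⟩
  have := hprob P hP
  simp

end A


section B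

lemma two_le_div_add_div {a b : ℝ≥0∞} (ha0 : a ≠ 0) (hat : a ≠ ⊤) (hb0 : b ≠ 0) (hbt : b ≠ ⊤) :
    2 ≤ a / b + b / a := by
  have hA : 0 < a.toReal := ENNReal.toReal_pos ha0 hat
  have hB : 0 < b.toReal := ENNReal.toReal_pos hb0 hbt
  have key : (2:ℝ) ≤ a.toReal / b.toReal + b.toReal / a.toReal := by
    rw [div_add_div _ _ (ne_of_gt hB) (ne_of_gt hA)]
    rw [le_div_iff₀ (by positivity)]
    nlinarith [sq_nonneg (a.toReal - b.toReal)]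
  have h1 : a / b + b / a = ENNReal.ofReal (a.toReal / b.toReal + b.toReal / a.toReal) := by
    rw [ENNReal.ofReal_add (by positivity) (by positivity)]
    rw [ENNReal.ofReal_div_of_pos hB, ENNReal.ofReal_div_of_pos hA,
      ENNReal.ofReal_toReal hat, ENNReal.ofReal_toReal hbt]
  rw [h1]
  calc (2:ℝ≥0∞) = ENNReal.ofReal 2 := by norm_num
    _ ≤ _ := ENNReal.ofReal_le_ofReal key

lemma four_div_add_le (a b : ℝ≥0∞) : 4 / (a + b) ≤ 1 / a + 1 / b := by
  rcases eq_or_ne a 0 with rfl | ha0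
  · simp
  rcases eq_or_ne b 0 with rfl | hb0
  · simp
  rcases eq_or_ne a ⊤ with rfl | hat
  · simp
  rcases eq_or_ne b ⊤ with rfl | hbt
  · simp
  have hab0 : a + b ≠ 0 := by simp [ha0]
  have habt : a + b ≠ ⊤ := by finiteness
  rw [ENNReal.div_le_iff_le_mul (Or.inl hab0) (Or.inl habt)]
  have expand : (1 / a + 1 / b) * (a + b) = 2 + (a / b + b / a) := by
    rw [add_mul, mul_add, mul_add]
    rw [one_div, one_div]
    rw [ENNReal.inv_mul_cancel ha0 hat, ENNReal.inv_mul_cancel hb0 hbt]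
    have h1 : a⁻¹ * b = b / a := by rw [div_eq_mul_inv, mul_comm]
    have h2 : b⁻¹ * a = a / b := by rw [div_eq_mul_inv, mul_comm]
    rw [h1, h2]; ring
  rw [expand]
  have := two_le_div_add_div ha0 hat hb0 hbt
  calc (4:ℝ≥0∞) = 2 + 2 := by norm_num
    _ ≤ 2 + (a / b + b / a) := by gcongr

lemma div_midpoint_le (c a b : ℝ≥0∞) :
    c / ((a + b) / 2) ≤ (c / a + c / b) / 2 := by
  have h2 : ((a + b) / 2)⁻¹ = 2 / (a + b) :=
    ENNReal.inv_div (Or.inl ENNReal.ofNat_ne_top) (Or.inl two_ne_zero)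
  have h3 : c / ((a + b) / 2) = c * (2 / (a + b)) := by rw [div_eq_mul_inv, h2]
  rw [h3, ENNReal.le_div_iff_mul_le (Or.inl two_ne_zero) (Or.inl ENNReal.ofNat_ne_top)]
  have h4 : c * (2 / (a + b)) * 2 = c * (4 / (a + b)) := by
    rw [div_eq_mul_inv, div_eq_mul_inv]; ring
  rw [h4]
  calc c * (4 / (a + b)) ≤ c * (1 / a + 1 / b) := mul_le_mul_right (four_div_add_le a b) c
    _ = c / a + c / b := by rw [mul_add, mul_one_div, mul_one_div]

end B


section C

/-- Truncated negative log: `psi m x = (log m - log (x ⊓ m))⁺`, with value `∞` at `x = 0`. -/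
noncomputable def psi (m : ℝ) (x : ℝ≥0∞) : ℝ≥0∞ :=
  if x = 0 then ⊤
  else ENNReal.ofReal (Real.log m - Real.log ((min x (ENNReal.ofReal m)).toReal))

variable {m : ℝ}

lemma psi_zero : psi m 0 = ⊤ := by simp [psi]

lemma psi_of_ne {x : ℝ≥0∞} (hx : x ≠ 0) :
    psi m x = ENNReal.ofReal (Real.log m - Real.log ((min x (ENNReal.ofReal m)).toReal)) := by
  simp [psi, hx]

lemma psi_ne_top {x : ℝ≥0∞} (hx : x ≠ 0) : psi m x ≠ ⊤ := by
  rw [psi_of_ne hx]; exact ENNReal.ofReal_ne_top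

lemma measurable_psi : Measurable (psi m) := by
  unfold psi
  refine Measurable.ite (measurableSet_singleton 0) measurable_const ?_
  exact (ENNReal.measurable_toReal.comp ((measurable_id.min measurable_const))).log.const_sub
    _ |>.ennreal_ofReal

lemma one_le_ofReal_m (hm : 1 ≤ m) : (1:ℝ≥0∞) ≤ ENNReal.ofReal m := by
  rw [show (1:ℝ≥0∞) = ENNReal.ofReal 1 by simp]
  exact ENNReal.ofReal_le_ofReal hm

lemma min_m_ne_zero (hm : 1 ≤ m) {x : ℝ≥0∞} (hx : x ≠ 0) : min x (ENNReal.ofReal m) ≠ 0 := by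
  simp only [ne_eq, min_eq_iff]
  rintro (⟨h, -⟩ | ⟨h, -⟩)
  · exact hx h
  · exact absurd h (by
      intro h0
      have := one_le_ofReal_m hm
      rw [h0] at this
      simp at this)

lemma min_m_ne_top {x : ℝ≥0∞} : min x (ENNReal.ofReal m) ≠ ⊤ :=
  ne_top_of_le_ne_top ENNReal.ofReal_ne_top (min_le_right _ _)

lemma min_m_toReal_pos (hm : 1 ≤ m) {x : ℝ≥0∞} (hx : x ≠ 0) :
    0 < (min x (ENNReal.ofReal m)).toReal :=
  ENNReal.toReal_pos (min_m_ne_zero hm hx) min_m_ne_top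

lemma min_m_toReal_le (hm : 1 ≤ m) (x : ℝ≥0∞) : (min x (ENNReal.ofReal m)).toReal ≤ m := by
  calc (min x (ENNReal.ofReal m)).toReal ≤ (ENNReal.ofReal m).toReal :=
        ENNReal.toReal_mono ENNReal.ofReal_ne_top (min_le_right _ _)
    _ ≤ m := by rw [ENNReal.toReal_ofReal (by linarith)]

lemma psi_log_nonneg (hm : 1 ≤ m) {x : ℝ≥0∞} (hx : x ≠ 0) :
    0 ≤ Real.log m - Real.log ((min x (ENNReal.ofReal m)).toReal) := by
  have := Real.log_le_log (min_m_toReal_pos hm hx) (min_m_toReal_le hm x)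
  linarith

lemma psi_toReal (hm : 1 ≤ m) {x : ℝ≥0∞} (hx : x ≠ 0) :
    (psi m x).toReal = Real.log m - Real.log ((min x (ENNReal.ofReal m)).toReal) := by
  rw [psi_of_ne hx, ENNReal.toReal_ofReal (psi_log_nonneg hm hx)]

lemma psi_antitone (hm : 1 ≤ m) : Antitone (psi m) := by
  intro x y hxy
  rcases eq_or_ne x 0 with rfl | hx
  · rw [psi_zero]; exact le_top
  have hy : y ≠ 0 := by rintro rfl; exact hx (le_zero_iff.mp hxy)
  rw [psi_of_ne hx, psi_of_ne hy]
  apply ENNReal.ofReal_le_ofReal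
  have hmono : (min x (ENNReal.ofReal m)).toReal ≤ (min y (ENNReal.ofReal m)).toReal :=
    ENNReal.toReal_mono min_m_ne_top (min_le_min_right _ hxy)
  have := Real.log_le_log (min_m_toReal_pos hm hx) hmono
  linarith

lemma psi_one_le (hm : 1 ≤ m) : psi m 1 ≤ ENNReal.ofReal (Real.log m) := by
  rw [psi_of_ne one_ne_zero]
  apply ENNReal.ofReal_le_ofReal
  have h1 : min 1 (ENNReal.ofReal m) = 1 := min_eq_left (one_le_ofReal_m hm)
  rw [h1]
  simp

lemma psi_midpoint (hm : 1 ≤ m) (x y : ℝ≥0∞) :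
    psi m ((x + y) / 2) ≤ (psi m x + psi m y) / 2 := by
  rcases eq_or_ne x 0 with rfl | hx
  · rw [psi_zero, show ((⊤:ℝ≥0∞) + psi m y) / 2 = ⊤ from by simp [ENNReal.div_eq_top]]
    exact le_top
  rcases eq_or_ne y 0 with rfl | hy
  · rw [psi_zero, show (psi m x + (⊤:ℝ≥0∞)) / 2 = ⊤ from by simp [ENNReal.div_eq_top]]
    exact le_top
  set b := ENNReal.ofReal m with hb
  set x' := min x b with hx'
  set y' := min y b with hy'
  have hx'0 : x' ≠ 0 := min_m_ne_zero hm hx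
  have hy'0 : y' ≠ 0 := min_m_ne_zero hm hy
  have hx't : x' ≠ ⊤ := min_m_ne_top
  have hy't : y' ≠ ⊤ := min_m_ne_top
  have step1 : psi m ((x + y) / 2) ≤ psi m ((x' + y') / 2) := by
    apply psi_antitone hm
    gcongr
    exacts [min_le_left _ _, min_le_left _ _]
  refine step1.trans ?_
  set z := (x' + y') / 2 with hz
  have hz0 : z ≠ 0 := by
    rw [hz]
    simp only [ne_eq, ENNReal.div_eq_zero_iff]
    push_neg
    constructor
    · simp [hx'0]
    · exact fun h => absurd h ENNReal.ofNat_ne_top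
  have hzb : z ≤ b := by
    rw [hz]
    rw [ENNReal.div_le_iff_le_mul (Or.inl two_ne_zero) (Or.inl ENNReal.ofNat_ne_top)]
    rw [mul_two]
    gcongr
    exacts [min_le_right _ _, min_le_right _ _]
  have hzt : z ≠ ⊤ := ne_top_of_le_ne_top ENNReal.ofReal_ne_top hzb
  have hminz : min z b = z := min_eq_left hzb
  set A := x'.toReal with hA
  set B := y'.toReal with hB
  have hApos : 0 < A := ENNReal.toReal_pos hx'0 hx't
  have hBpos : 0 < B := ENNReal.toReal_pos hy'0 hy't
  have hztoReal : z.toReal = (A + B) / 2 := by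
    rw [hz, ENNReal.toReal_div, ENNReal.toReal_add hx't hy't]
    norm_num
    rfl
  -- key real inequality
  have key : (Real.log A + Real.log B) / 2 ≤ Real.log ((A + B) / 2) := by
    have hs : Real.sqrt (A * B) ≤ (A + B) / 2 := by
      have h1 : A * B ≤ ((A + B) / 2) ^ 2 := by nlinarith [sq_nonneg (A - B)]
      calc Real.sqrt (A * B) ≤ Real.sqrt (((A + B) / 2) ^ 2) := Real.sqrt_le_sqrt h1
        _ = (A + B) / 2 := Real.sqrt_sq (by positivity)
    have h2 : Real.log (Real.sqrt (A * B)) ≤ Real.log ((A + B) / 2) :=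
      Real.log_le_log (Real.sqrt_pos.mpr (by positivity)) hs
    rw [Real.log_sqrt (by positivity), Real.log_mul (ne_of_gt hApos) (ne_of_gt hBpos)] at h2
    linarith
  rw [psi_of_ne hz0, psi_of_ne hx, psi_of_ne hy, hminz]
  rw [← hx', ← hy', ← hA, ← hB, hztoReal]
  have hnn1 : 0 ≤ Real.log m - Real.log A := by
    have h := Real.log_le_log hApos (min_m_toReal_le hm x)
    linarith
  have hnn2 : 0 ≤ Real.log m - Real.log B := by
    have h := Real.log_le_log hBpos (min_m_toReal_le hm y)
    linarith
  have hRHS : (ENNReal.ofReal (Real.log m - Real.log A) + ENNReal.ofReal (Real.log m - Real.log B)) / 2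
      = ENNReal.ofReal (((Real.log m - Real.log A) + (Real.log m - Real.log B)) / 2) := by
    rw [eq_comm, ENNReal.ofReal_div_of_pos (by norm_num), ENNReal.ofReal_add hnn1 hnn2]
    norm_num
  rw [hRHS]
  apply ENNReal.ofReal_le_ofReal
  linarith

lemma psi_smul_le (hm : 1 ≤ m) {s : ℝ} (hs0 : 0 < s) (hs1 : s ≤ 1) (x : ℝ≥0∞) :
    psi m (ENNReal.ofReal s * x) ≤ psi m x + ENNReal.ofReal (- Real.log s) := by
  rcases eq_or_ne x 0 with rfl | hx
  · simp [psi_zero]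
  set b := ENNReal.ofReal m with hb
  have hsx0 : ENNReal.ofReal s * x ≠ 0 := by
    apply mul_ne_zero _ hx
    simp [ENNReal.ofReal_eq_zero]
    linarith
  set x' := min x b with hx'
  have hx'0 : x' ≠ 0 := min_m_ne_zero hm hx
  have hx't : x' ≠ ⊤ := min_m_ne_top
  have hkey : ENNReal.ofReal s * x' ≤ min (ENNReal.ofReal s * x) b := by
    apply le_min
    · exact mul_le_mul_right (min_le_left _ _) _
    · calc ENNReal.ofReal s * x' ≤ 1 * x' := by
            apply mul_le_mul_left
            rw [show (1:ℝ≥0∞) = ENNReal.ofReal 1 by simp]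
            exact ENNReal.ofReal_le_ofReal hs1
        _ = x' := one_mul _
        _ ≤ b := min_le_right _ _
  have hsx'0 : ENNReal.ofReal s * x' ≠ 0 := by
    apply mul_ne_zero _ hx'0
    simp [ENNReal.ofReal_eq_zero]; linarith
  have hsx't : ENNReal.ofReal s * x' ≠ ⊤ :=
    ENNReal.mul_ne_top ENNReal.ofReal_ne_top hx't
  have hlog : Real.log s + Real.log x'.toReal ≤ Real.log ((min (ENNReal.ofReal s * x) b).toReal) := by
    have h1 : (ENNReal.ofReal s * x').toReal ≤ (min (ENNReal.ofReal s * x) b).toReal :=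
      ENNReal.toReal_mono min_m_ne_top hkey
    have h2 : (ENNReal.ofReal s * x').toReal = s * x'.toReal := by
      rw [ENNReal.toReal_mul, ENNReal.toReal_ofReal (le_of_lt hs0)]
    have hx'pos : 0 < x'.toReal := ENNReal.toReal_pos hx'0 hx't
    have h3 := Real.log_le_log (by rw [h2]; exact mul_pos hs0 hx'pos) h1
    rw [h2, Real.log_mul (ne_of_gt hs0) (ne_of_gt (ENNReal.toReal_pos hx'0 hx't))] at h3
    exact h3
  rw [psi_of_ne hsx0, psi_of_ne hx, ← hb, ← hx']
  calc ENNReal.ofReal (Real.log m - Real.log ((min (ENNReal.ofReal s * x) b).toReal))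
      ≤ ENNReal.ofReal ((Real.log m - Real.log x'.toReal) + (- Real.log s)) := by
        apply ENNReal.ofReal_le_ofReal; linarith
    _ ≤ _ := ENNReal.ofReal_add_le

end C


section C2
variable {m : ℝ}

lemma psi_tendsto (hm : 1 ≤ m) {z : ℕ → ℝ≥0∞} {l : ℝ≥0∞}
    (hz : Tendsto z atTop (𝓝 l)) :
    Tendsto (fun i => psi m (z i)) atTop (𝓝 (psi m l)) := by
  rcases eq_or_ne l 0 with rfl | hl
  · -- l = 0 : psi → ⊤
    rw [psi_zero]
    rw [ENNReal.tendsto_nhds_top_iff_nnreal]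
    intro r
    set δr : ℝ := Real.exp (-((r:ℝ) + 1)) with hδr
    have hδrpos : 0 < δr := Real.exp_pos _
    set δ : ℝ≥0∞ := min (ENNReal.ofReal δr) 1 with hδ
    have hδpos : 0 < δ := by
      apply lt_min
      · exact ENNReal.ofReal_pos.mpr hδrpos
      · norm_num
    have hev : ∀ᶠ i in atTop, z i < δ := by
      have : Iio δ ∈ 𝓝 (0:ℝ≥0∞) := Iio_mem_nhds hδpos
      exact hz.eventually this
    filter_upwards [hev] with i hi
    rcases eq_or_ne (z i) 0 with h0 | h0
    · rw [h0, psi_zero]; exact ENNReal.coe_lt_top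
    · have hzb : z i < 1 := lt_of_lt_of_le hi (min_le_right _ _)
      have hzt : z i ≠ ⊤ := ne_top_of_lt hzb
      have hmin : min (z i) (ENNReal.ofReal m) = z i :=
        min_eq_left (le_trans (le_of_lt hzb) (one_le_ofReal_m hm))
      rw [psi_of_ne h0, hmin]
      have htR : (z i).toReal < δr := by
        have h1 : z i < ENNReal.ofReal δr := lt_of_lt_of_le hi (min_le_left _ _)
        rw [← ENNReal.toReal_lt_toReal hzt ENNReal.ofReal_ne_top] at h1
        rwa [ENNReal.toReal_ofReal (le_of_lt hδrpos)] at h1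
      have htRpos : 0 < (z i).toReal := ENNReal.toReal_pos h0 hzt
      have hlog : Real.log ((z i).toReal) < -((r:ℝ) + 1) := by
        have := Real.log_lt_log htRpos htR
        rwa [hδr, Real.log_exp] at this
      have hlogm : 0 ≤ Real.log m := Real.log_nonneg hm
      have : (r:ℝ) < Real.log m - Real.log ((z i).toReal) := by linarith
      calc (r:ℝ≥0∞) = ENNReal.ofReal (r:ℝ) := (ENNReal.ofReal_coe_nnreal).symm
        _ < ENNReal.ofReal (Real.log m - Real.log ((z i).toReal)) := by
            rw [ENNReal.ofReal_lt_ofReal_iff (lt_of_le_of_lt r.coe_nonneg this)]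
            exact this
  · -- l ≠ 0
    set l' : ℝ≥0∞ := min (l / 2) 1 with hl'
    have hl'pos : 0 < l' := by
      apply lt_min
      · simp only [ENNReal.div_pos_iff]
        exact ⟨hl, ENNReal.ofNat_ne_top⟩
      · norm_num
    have hl'lt : l' < l := by
      rcases eq_or_ne l ⊤ with rfl | hlt
      · exact lt_of_le_of_lt (min_le_right _ _) (by norm_num)
      · exact lt_of_le_of_lt (min_le_left _ _) (ENNReal.half_lt_self hl hlt)
    have hev : ∀ᶠ i in atTop, l' < z i := hz.eventually (Ioi_mem_nhds hl'lt)
    have T1 : Tendsto (fun i => min (z i) (ENNReal.ofReal m)) atTop (𝓝 (min l (ENNReal.ofReal m))) :=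
      hz.min tendsto_const_nhds
    have T2 : Tendsto (fun i => (min (z i) (ENNReal.ofReal m)).toReal) atTop
        (𝓝 ((min l (ENNReal.ofReal m)).toReal)) :=
      (ENNReal.tendsto_toReal min_m_ne_top).comp T1
    have T3 : Tendsto (fun i => Real.log ((min (z i) (ENNReal.ofReal m)).toReal)) atTop
        (𝓝 (Real.log ((min l (ENNReal.ofReal m)).toReal))) :=
      (Real.continuousAt_log (ne_of_gt (min_m_toReal_pos hm hl))).tendsto.comp T2
    have T4 : Tendsto (fun i => Real.log m - Real.log ((min (z i) (ENNReal.ofReal m)).toReal))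
        atTop (𝓝 (Real.log m - Real.log ((min l (ENNReal.ofReal m)).toReal))) :=
      tendsto_const_nhds.sub T3
    have T5 : Tendsto (fun i => ENNReal.ofReal
        (Real.log m - Real.log ((min (z i) (ENNReal.ofReal m)).toReal))) atTop
        (𝓝 (ENNReal.ofReal (Real.log m - Real.log ((min l (ENNReal.ofReal m)).toReal)))) :=
      (ENNReal.continuous_ofReal.tendsto _).comp T4
    rw [psi_of_ne hl]
    apply T5.congr'
    filter_upwards [hev] with i hi
    rw [psi_of_ne (ne_of_gt (lt_of_le_of_lt zero_le (lt_of_le_of_lt (le_refl l') hi)))]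

end C2


/-- `exp(-x)` for extended nonneg reals, with `eexp ⊤ = 0`. -/
def eexp (x : ℝ≥0∞) : ℝ := if x = ⊤ then 0 else Real.exp (-x.toReal)

/-- Inverse of `eexp`. -/
def elog (s : ℝ) : ℝ≥0∞ := if s ≤ 0 then ⊤ else ENNReal.ofReal (-Real.log s)

lemma eexp_nonneg (x : ℝ≥0∞) : 0 ≤ eexp x := by
  unfold eexp; split
  · exact le_rfl
  · exact le_of_lt (Real.exp_pos _)

lemma eexp_le_one (x : ℝ≥0∞) : eexp x ≤ 1 := by
  unfold eexp; split
  · norm_num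
  · rw [show (1:ℝ) = Real.exp 0 by simp]
    apply Real.exp_le_exp.mpr
    simp [ENNReal.toReal_nonneg]

lemma measurable_eexp : Measurable eexp := by
  unfold eexp
  exact Measurable.ite (measurableSet_singleton ⊤) measurable_const
    (Real.measurable_exp.comp ENNReal.measurable_toReal.neg)

lemma eexp_mid (a b : ℝ≥0∞) :
    eexp ((a + b) / 2) = Real.sqrt (eexp a) * Real.sqrt (eexp b) := by
  have hsq : ∀ u : ℝ, Real.sqrt (Real.exp u) = Real.exp (u / 2) := by
    intro u
    rw [show Real.exp u = Real.exp (u/2) * Real.exp (u/2) by rw [← Real.exp_add]; ring_nf]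
    exact Real.sqrt_mul_self (le_of_lt (Real.exp_pos _))
  rcases eq_or_ne a ⊤ with rfl | hat
  · rw [show ((⊤:ℝ≥0∞) + b)/2 = ⊤ by simp [ENNReal.div_eq_top]]
    simp [eexp]
  rcases eq_or_ne b ⊤ with rfl | hbt
  · rw [show (a + (⊤:ℝ≥0∞))/2 = ⊤ by simp [ENNReal.div_eq_top]]
    simp [eexp]
  have hmidt : (a + b) / 2 ≠ ⊤ :=
    ne_of_lt (ENNReal.div_lt_top (by finiteness) two_ne_zero)
  unfold eexp
  rw [if_neg hat, if_neg hbt, if_neg hmidt]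
  rw [hsq, hsq]
  rw [← Real.exp_add]
  congr 1
  rw [ENNReal.toReal_div, ENNReal.toReal_add hat hbt, ENNReal.toReal_ofNat]
  ring

lemma elog_eexp (x : ℝ≥0∞) : elog (eexp x) = x := by
  rcases eq_or_ne x ⊤ with rfl | hxt
  · simp [eexp, elog]
  · unfold eexp elog
    rw [if_neg hxt, if_neg (not_le.mpr (Real.exp_pos _))]
    rw [Real.log_exp, neg_neg, ENNReal.ofReal_toReal hxt]

lemma tendsto_elog_of_pos {s : ℕ → ℝ} {L : ℝ} (hL : 0 < L)
    (hs : Filter.Tendsto s atTop (nhds L)) :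
    Filter.Tendsto (fun k => elog (s k)) atTop (nhds (elog L)) := by
  have hev : ∀ᶠ k in atTop, L / 2 < s k := hs.eventually (eventually_gt_nhds (by linarith))
  have T1 : Filter.Tendsto (fun k => ENNReal.ofReal (-Real.log (s k))) atTop
      (nhds (ENNReal.ofReal (-Real.log L))) :=
    (ENNReal.continuous_ofReal.tendsto _).comp
      (((Real.continuousAt_log (ne_of_gt hL)).tendsto.comp hs).neg)
  rw [show elog L = ENNReal.ofReal (-Real.log L) from if_neg (not_le.mpr hL)]
  apply T1.congr'
  filter_upwards [hev] with k hk
  rw [elog, if_neg (not_le.mpr (by linarith))]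

lemma tendsto_elog_of_zero {s : ℕ → ℝ}
    (hs : Filter.Tendsto s atTop (nhds 0)) :
    Filter.Tendsto (fun k => elog (s k)) atTop (nhds ⊤) := by
  rw [ENNReal.tendsto_nhds_top_iff_nnreal]
  intro r
  have hev : ∀ᶠ k in atTop, s k < Real.exp (-((r:ℝ)+1)) :=
    hs.eventually (eventually_lt_nhds (Real.exp_pos _))
  filter_upwards [hev] with k hk
  by_cases h0 : s k ≤ 0
  · rw [elog, if_pos h0]; exact ENNReal.coe_lt_top
  · push_neg at h0
    rw [elog, if_neg (not_le.mpr h0)]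
    have hlog : Real.log (s k) < -((r:ℝ)+1) := by
      have := Real.log_lt_log h0 hk
      rwa [Real.log_exp] at this
    have : (r:ℝ) < -Real.log (s k) := by linarith
    calc (r:ℝ≥0∞) = ENNReal.ofReal (r:ℝ) := (ENNReal.ofReal_coe_nnreal).symm
      _ < ENNReal.ofReal (-Real.log (s k)) := by
          rw [ENNReal.ofReal_lt_ofReal_iff (lt_of_le_of_lt r.coe_nonneg this)]
          exact this



theorem komlos (Q : Measure Ω) [IsProbabilityMeasure Q]
    (f : ℕ → Ω → ℝ≥0∞) (hf : ∀ n, Measurable (f n)) :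
    ∃ g : ℕ → Ω → ℝ≥0∞,
      (∀ k, MidCl {h | ∃ j, k ≤ j ∧ h = f j} (g k)) ∧ (∀ k, Measurable (g k)) ∧
      ∀ᵐ ω ∂Q, ∃ L, Tendsto (fun k => g k ω) atTop (𝓝 L) := by
  classical
  set gens : ℕ → Set (Ω → ℝ≥0∞) := fun n => {h | ∃ j, n ≤ j ∧ h = f j} with hgens
  have hgens_mono : ∀ {n n' : ℕ}, n ≤ n' → gens n' ⊆ gens n := by
    rintro n n' hnn' h ⟨j, hj, rfl⟩
    exact ⟨j, le_trans hnn' hj, rfl⟩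
  have hgens_meas : ∀ n, ∀ h ∈ gens n, Measurable h := by
    rintro n h ⟨j, -, rfl⟩; exact hf j
  set Φ : (Ω → ℝ≥0∞) → ℝ := fun h => ∫ ω, eexp (h ω) ∂Q with hΦ
  have hint : ∀ {h : Ω → ℝ≥0∞}, Measurable h → Integrable (fun ω => eexp (h ω)) Q := by
    intro h hh
    refine Integrable.mono' (integrable_const 1)
      ((measurable_eexp.comp hh).aestronglyMeasurable) ?_
    refine ae_of_all _ fun ω => ?_
    rw [Real.norm_eq_abs, abs_of_nonneg (eexp_nonneg _)]
    exact eexp_le_one _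
  have hΦ_nonneg : ∀ {h : Ω → ℝ≥0∞}, 0 ≤ Φ h := fun {h} => integral_nonneg fun ω => eexp_nonneg _
  have hΦ_le_one : ∀ {h : Ω → ℝ≥0∞}, Measurable h → Φ h ≤ 1 := by
    intro h hh
    calc ∫ ω, eexp (h ω) ∂Q ≤ ∫ _, (1:ℝ) ∂Q :=
          integral_mono (hint hh) (integrable_const 1) (fun ω => eexp_le_one _)
      _ = 1 := by simp
  set C : ℕ → Set (Ω → ℝ≥0∞) := fun n => {h | MidCl (gens n) h} with hC
  have hfC : ∀ n, f n ∈ C n := fun n => MidCl.base ⟨n, le_rfl, rfl⟩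
  have hCne : ∀ n, (Φ '' C n).Nonempty := fun n => ⟨Φ (f n), ⟨f n, hfC n, rfl⟩⟩
  have hCbdd : ∀ n, BddBelow (Φ '' C n) := fun n => ⟨0, by rintro y ⟨h, -, rfl⟩; exact hΦ_nonneg⟩
  set c : ℕ → ℝ := fun n => sInf (Φ '' C n) with hc
  have hCmono : ∀ {n n' : ℕ}, n ≤ n' → C n' ⊆ C n :=
    fun {n n'} hnn' h hh => MidCl.mono (hgens_mono hnn') hh
  have hcmono : Monotone c := fun n n' hnn' =>
    csInf_le_csInf (hCbdd n) (hCne n') (image_mono (hCmono hnn'))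
  have hMeasC : ∀ {n : ℕ} {h}, h ∈ C n → Measurable h :=
    fun {n h} hh => MidCl.measurable (hgens_meas n) hh
  have hcle : ∀ n, c n ≤ 1 := fun n =>
    le_trans (csInf_le (hCbdd n) ⟨f n, hfC n, rfl⟩) (hΦ_le_one (hf n))
  have hbddA : BddAbove (Set.range c) := ⟨1, by rintro y ⟨n, rfl⟩; exact hcle n⟩
  set cc : ℝ := ⨆ n, c n with hcc
  have hctend : Tendsto c atTop (𝓝 cc) := tendsto_atTop_ciSup hcmono hbddA
  have hccle : ∀ n, c n ≤ cc := fun n => le_ciSup hbddA n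
  have hsel : ∀ n : ℕ, ∃ h, h ∈ C n ∧ Φ h < c n + 1/(n+1) := by
    intro n
    have hlt : sInf (Φ '' C n) < c n + 1/((n:ℝ)+1) := by
      have hp : (0:ℝ) < 1/((n:ℝ)+1) := by positivity
      have : c n = sInf (Φ '' C n) := rfl
      linarith [this]
    obtain ⟨y, ⟨h, hhC, rfl⟩, hy⟩ := exists_lt_of_csInf_lt (hCne n) hlt
    exact ⟨h, hhC, hy⟩
  choose g hgC hgΦ using hsel
  have hgmeas : ∀ n, Measurable (g n) := fun n => hMeasC (hgC n)
  set w : ℕ → Ω → ℝ := fun n ω => Real.sqrt (eexp (g n ω)) with hw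
  have hwmeas : ∀ n, Measurable (w n) := fun n =>
    (measurable_eexp.comp (hgmeas n)).sqrt
  have hwnonneg : ∀ n ω, 0 ≤ w n ω := fun n ω => Real.sqrt_nonneg _
  have hwle : ∀ n ω, w n ω ≤ 1 := by
    intro n ω
    rw [show (1:ℝ) = Real.sqrt 1 by simp]
    exact Real.sqrt_le_sqrt (eexp_le_one _)
  have hwint : ∀ n, Integrable (w n) Q := by
    intro n
    refine Integrable.mono' (integrable_const 1) (hwmeas n).aestronglyMeasurable ?_
    exact ae_of_all _ fun ω => by
      rw [Real.norm_eq_abs, abs_of_nonneg (hwnonneg n ω)]; exact hwle n ω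
  -- key estimate
  have key : ∀ n mm : ℕ, n ≤ mm →
      ∫ ω, (w n ω - w mm ω)^2 ∂Q ≤ 2*(cc - c n) + 2/((n:ℝ)+1) := by
    intro n mm hnm
    set md : Ω → ℝ≥0∞ := fun ω => (g n ω + g mm ω)/2 with hmd
    have hmdC : md ∈ C n := MidCl.mid (hgC n) (MidCl.mono (hgens_mono hnm) (hgC mm))
    have hmdmeas : Measurable md := hMeasC hmdC
    have hpt : ∀ ω, (w n ω - w mm ω)^2 = eexp (g n ω) + eexp (g mm ω) - 2 * eexp (md ω) := by
      intro ω
      have h1 : eexp (md ω) = Real.sqrt (eexp (g n ω)) * Real.sqrt (eexp (g mm ω)) :=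
        eexp_mid _ _
      rw [h1, hw]
      simp only []
      rw [sub_sq, Real.sq_sqrt (eexp_nonneg _), Real.sq_sqrt (eexp_nonneg _)]
      ring
    have hI : ∫ ω, (w n ω - w mm ω)^2 ∂Q = Φ (g n) + Φ (g mm) - 2 * Φ md := by
      rw [show (fun ω => (w n ω - w mm ω)^2)
          = fun ω => eexp (g n ω) + eexp (g mm ω) - 2*eexp (md ω) from funext hpt]
      have hIadd : Integrable (fun ω => eexp (g n ω) + eexp (g mm ω)) Q :=
        (hint (hgmeas n)).add (hint (hgmeas mm))
      rw [integral_sub hIadd ((hint hmdmeas).const_mul 2)]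
      rw [integral_add (hint (hgmeas n)) (hint (hgmeas mm)), integral_const_mul]
    have hΦmd : c n ≤ Φ md := csInf_le (hCbdd n) ⟨md, hmdC, rfl⟩
    have h1 := hgΦ n
    have h2 := hgΦ mm
    have h3 : c mm ≤ cc := hccle mm
    have h4 : (1:ℝ)/((mm:ℝ)+1) ≤ 1/((n:ℝ)+1) := by
      have hn : (n:ℝ) ≤ (mm:ℝ) := Nat.cast_le.mpr hnm
      apply one_div_le_one_div_of_le (by positivity) (by linarith)
    have h5 : c n ≤ cc := hccle n
    have h6 : 2/((n:ℝ)+1) = 2*(1/((n:ℝ)+1)) := by ring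
    have h7 : (0:ℝ) ≤ 1/((n:ℝ)+1) := by positivity
    rw [hI]; linarith
  set β : ℕ → ℝ := fun n => 2*(cc - c n) + 2/((n:ℝ)+1) with hβ
  have hβ0 : Tendsto β atTop (𝓝 0) := by
    have h1 : Tendsto (fun n => 2*(cc - c n)) atTop (𝓝 (2*(cc - cc))) :=
      (tendsto_const_nhds.sub hctend).const_mul 2
    have h2 : Tendsto (fun n : ℕ => 2/((n:ℝ)+1)) atTop (𝓝 0) := by
      have h3 := tendsto_one_div_add_atTop_nhds_zero_nat.const_mul (2:ℝ)
      simp only [mul_one_div] at h3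
      simpa using h3
    have := h1.add h2
    simpa using this
  have hNs : ∀ k : ℕ, ∃ N, ∀ n ≥ N, β n < (1/4:ℝ)^(k+1) := by
    intro k
    have hpos : (0:ℝ) < (1/4:ℝ)^(k+1) := by positivity
    exact eventually_atTop.mp (hβ0.eventually (eventually_lt_nhds hpos))
  choose N hN using hNs
  set ns : ℕ → ℕ := fun k => Nat.rec (N 0) (fun k ih => max (N (k+1)) (ih+1)) k with hns
  have hns1 : ∀ k, N k ≤ ns k := by
    intro k; cases k with
    | zero => exact le_rfl
    | succ k => exact le_max_left _ _
  have hns2 : ∀ k, ns k < ns (k+1) := fun k =>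
    lt_of_lt_of_le (Nat.lt_succ_self _) (le_max_right _ _)
  have hnsk : ∀ k, k ≤ ns k := by
    intro k
    induction k with
    | zero => exact Nat.zero_le _
    | succ k ih => have := hns2 k; omega
  have hβns : ∀ k, β (ns k) < (1/4:ℝ)^(k+1) := fun k => hN k (ns k) (hns1 k)
  have hd2 : ∀ k, ∫ ω, (w (ns k) ω - w (ns (k+1)) ω)^2 ∂Q ≤ (1/4:ℝ)^(k+1) :=
    fun k => le_of_lt (lt_of_le_of_lt (key (ns k) (ns (k+1)) (le_of_lt (hns2 k))) (hβns k))
  have habs : ∀ k, ∫ ω, |w (ns k) ω - w (ns (k+1)) ω| ∂Q ≤ (1/2:ℝ)^(k+1) := by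
    intro k
    set ε : ℝ := (1/2:ℝ)^(k+1) with hε
    have hεpos : 0 < ε := by positivity
    have hdint : Integrable (fun ω => w (ns k) ω - w (ns (k+1)) ω) Q := (hwint _).sub (hwint _)
    have hdsqint : Integrable (fun ω => (w (ns k) ω - w (ns (k+1)) ω)^2) Q := by
      refine Integrable.mono' (integrable_const 4)
        (((hwmeas _).sub (hwmeas _)).pow_const 2).aestronglyMeasurable ?_
      refine ae_of_all _ fun ω => ?_
      rw [Real.norm_eq_abs, abs_of_nonneg (sq_nonneg _)]
      have h1 : |w (ns k) ω - w (ns (k+1)) ω| ≤ 2 := by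
        have e1 := hwnonneg (ns k) ω; have e2 := hwle (ns k) ω
        have e3 := hwnonneg (ns (k+1)) ω; have e4 := hwle (ns (k+1)) ω
        rw [abs_le]; constructor <;> linarith
      calc (w (ns k) ω - w (ns (k+1)) ω)^2 = |w (ns k) ω - w (ns (k+1)) ω|^2 := (sq_abs _).symm
        _ ≤ 2^2 := pow_le_pow_left₀ (abs_nonneg _) h1 2
        _ = 4 := by norm_num
    have hptw : ∀ ω, |w (ns k) ω - w (ns (k+1)) ω|
        ≤ ((w (ns k) ω - w (ns (k+1)) ω)^2/ε + ε)/2 := by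
      intro ω
      set d := w (ns k) ω - w (ns (k+1)) ω with hd
      rw [le_div_iff₀ (by norm_num : (0:ℝ) < 2)]
      have hid : (abs d - ε)^2 / ε = d^2/ε - 2*abs d + ε := by
        rw [sub_sq, sq_abs]
        field_simp [ne_of_gt hεpos]
      have h2 : 0 ≤ (abs d - ε)^2/ε := div_nonneg (sq_nonneg _) hεpos.le
      rw [hid] at h2
      linarith [h2]
    have hrint : Integrable (fun ω => ((w (ns k) ω - w (ns (k+1)) ω)^2/ε + ε)/2) Q :=
      ((hdsqint.div_const ε).add (integrable_const ε)).div_const 2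
    calc ∫ ω, |w (ns k) ω - w (ns (k+1)) ω| ∂Q
        ≤ ∫ ω, ((w (ns k) ω - w (ns (k+1)) ω)^2/ε + ε)/2 ∂Q :=
          integral_mono hdint.abs hrint hptw
      _ = ((∫ ω, (w (ns k) ω - w (ns (k+1)) ω)^2 ∂Q)/ε + ε)/2 := by
          rw [integral_div, integral_add (hdsqint.div_const ε) (integrable_const ε),
            integral_div, integral_const]
          simp
      _ ≤ (((1/4:ℝ)^(k+1))/ε + ε)/2 := by gcongr; exact hd2 k
      _ = ε := by
          have h14 : (1/4:ℝ)^(k+1) = ε*ε := by rw [hε, ← mul_pow]; norm_num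
          rw [h14, mul_div_assoc, div_self (ne_of_gt hεpos), mul_one]
          ring
  have hsum1 : ∀ k, ∫⁻ ω, ENNReal.ofReal (|w (ns k) ω - w (ns (k+1)) ω|) ∂Q
      ≤ ENNReal.ofReal ((1/2:ℝ)^(k+1)) := by
    intro k
    have he := ofReal_integral_eq_lintegral_ofReal (μ := Q)
      (f := fun ω => |w (ns k) ω - w (ns (k+1)) ω|) ((hwint _).sub (hwint _)).abs
      (ae_of_all _ fun ω => abs_nonneg _)
    rw [← he]
    exact ENNReal.ofReal_le_ofReal (habs k)
  set F : Ω → ℝ≥0∞ := fun ω => ∑' k, ENNReal.ofReal (|w (ns k) ω - w (ns (k+1)) ω|) with hF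
  have hFmeas : Measurable F :=
    Measurable.ennreal_tsum (fun k => (((hwmeas _).sub (hwmeas _)).abs).ennreal_ofReal)
  have hFint : ∫⁻ ω, F ω ∂Q ≤ 1 := by
    rw [hF]
    simp only []
    rw [lintegral_tsum (f := fun k ω => ENNReal.ofReal |w (ns k) ω - w (ns (k+1)) ω|) (fun k => (((hwmeas _).sub (hwmeas _)).abs.ennreal_ofReal).aemeasurable)]
    calc ∑' k, ∫⁻ ω, ENNReal.ofReal (|w (ns k) ω - w (ns (k+1)) ω|) ∂Q
        ≤ ∑' k, ENNReal.ofReal ((1/2:ℝ)^(k+1)) := ENNReal.tsum_le_tsum hsum1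
      _ = ∑' k : ℕ, (2⁻¹ : ℝ≥0∞)^(k+1) := by
          congr 1; funext k
          rw [ENNReal.ofReal_pow (by norm_num)]
          congr 1
          rw [one_div, ENNReal.ofReal_inv_of_pos (by norm_num)]
          norm_num
      _ = 1 := by
          simp only [pow_succ]
          rw [ENNReal.tsum_mul_right, ENNReal.tsum_geometric]
          rw [ENNReal.one_sub_inv_two, inv_inv]
          exact ENNReal.mul_inv_cancel two_ne_zero ENNReal.ofNat_ne_top
  have hae1 : ∀ᵐ ω ∂Q, F ω < ⊤ :=
    ae_lt_top hFmeas (ne_of_lt (lt_of_le_of_lt hFint ENNReal.one_lt_top))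
  refine ⟨fun k => g (ns k), fun k => MidCl.mono (hgens_mono (hnsk k)) (hgC (ns k)),
    fun k => hgmeas _, ?_⟩
  filter_upwards [hae1] with ω hω
  have hsummable : Summable (fun k => |w (ns k) ω - w (ns (k+1)) ω|) := by
    have h1 : ∑' k, ENNReal.ofReal (|w (ns k) ω - w (ns (k+1)) ω|) ≠ ⊤ := ne_of_lt hω
    have h2 : Summable (fun k => (|w (ns k) ω - w (ns (k+1)) ω|).toNNReal) := by
      rw [← ENNReal.tsum_coe_ne_top_iff_summable]
      exact h1
    have h3 := NNReal.summable_coe.mpr h2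
    have h4 : (fun k => ((|w (ns k) ω - w (ns (k+1)) ω|).toNNReal : ℝ))
        = fun k => |w (ns k) ω - w (ns (k+1)) ω| := by
      funext k; exact Real.coe_toNNReal _ (abs_nonneg _)
    rwa [h4] at h3
  have hcauchy : CauchySeq (fun k => w (ns k) ω) := by
    apply cauchySeq_of_summable_dist
    have h4 : (fun k => dist (w (ns k) ω) (w (ns (k+1)) ω))
        = fun k => |w (ns k) ω - w (ns (k+1)) ω| := by
      funext k; exact Real.dist_eq _ _
    rwa [h4]
  obtain ⟨Lw, hLw⟩ := cauchySeq_tendsto_of_complete hcauchy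
  have heexp_t : Tendsto (fun k => eexp (g (ns k) ω)) atTop (𝓝 (Lw*Lw)) := by
    have h1 := hLw.mul hLw
    exact h1.congr (fun k => Real.mul_self_sqrt (eexp_nonneg _))
  rcases lt_or_eq_of_le (mul_self_nonneg Lw) with hpos | hzero
  · exact ⟨elog (Lw*Lw), (tendsto_elog_of_pos hpos heexp_t).congr (fun k => elog_eexp _)⟩
  · rw [← hzero] at heexp_t
    exact ⟨⊤, (tendsto_elog_of_zero heexp_t).congr (fun k => elog_eexp _)⟩




lemma exists_psi_minimizer (Pfam : Set (Measure Ω))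
    (hprob : ∀ P ∈ Pfam, IsProbabilityMeasure P)
    (Q : Measure Ω) [IsProbabilityMeasure Q] (μ : Measure Ω)
    (hac : ∀ p : Ω → Prop, (∀ᵐ ω ∂Q, p ω) → (∀ᵐ ω ∂μ, p ω))
    {m : ℝ} (hm : 1 ≤ m) :
    ∃ X0, IsEVar Pfam X0 ∧ ∀ X, IsEVar Pfam X →
      ∫⁻ ω, psi m (X0 ω) ∂μ ≤ ∫⁻ ω, psi m (X ω) ∂μ := by
  classical
  set K : (Ω → ℝ≥0∞) → ℝ≥0∞ := fun X => ∫⁻ ω, psi m (X ω) ∂μ with hK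
  set km : ℝ≥0∞ := ⨅ (X : {X // IsEVar Pfam X}), K X.val with hkm
  have hkm_le : ∀ X, IsEVar Pfam X → km ≤ K X := fun X hX => iInf_le (fun X : {X // IsEVar Pfam X} => K X.val) ⟨X, hX⟩
  have hsel : ∀ i : ℕ, ∃ X, IsEVar Pfam X ∧ K X ≤ km + 1/((i:ℝ≥0∞)+1) := by
    intro i
    rcases eq_or_ne km ⊤ with h | h
    · exact ⟨fun _ => 1, isEVar_one Pfam hprob, by rw [h]; simp⟩
    · have hlt : km < km + 1/((i:ℝ≥0∞)+1) := by
        apply ENNReal.lt_add_right h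
        simp [ENNReal.div_eq_zero_iff]
      rw [hkm, iInf_lt_iff] at hlt
      obtain ⟨⟨X, hX⟩, hXlt⟩ := hlt
      exact ⟨X, hX, le_of_lt hXlt⟩
  choose f hfE hfK using hsel
  obtain ⟨g, hgMid, hgMeas, hgConv⟩ := komlos Q (fun i => f i) (fun i => (hfE i).1)
  set X0 : Ω → ℝ≥0∞ := fun ω => liminf (fun k => g k ω) atTop with hX0
  have hX0meas : Measurable X0 := Measurable.liminf (fun k => hgMeas k)
  have hgE : ∀ k, IsEVar Pfam (g k) := fun k =>
    MidCl.isEVar (by rintro h ⟨j, -, rfl⟩; exact hfE j) (hgMid k)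
  have hX0E : IsEVar Pfam X0 := by
    refine ⟨hX0meas, fun P hP => ?_⟩
    calc ∫⁻ ω, X0 ω ∂P ≤ liminf (fun k => ∫⁻ ω, g k ω ∂P) atTop :=
          lintegral_liminf_le (fun k => (hgE k).1)
      _ ≤ liminf (fun _ : ℕ => (1:ℝ≥0∞)) atTop :=
          liminf_le_liminf (Eventually.of_forall fun k => (hgE k).2 P hP)
      _ = 1 := liminf_const _
  have hconv' : ∀ᵐ ω ∂μ, Tendsto (fun k => g k ω) atTop (𝓝 (X0 ω)) := by
    apply hac
    filter_upwards [hgConv] with ω hω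
    obtain ⟨L, hL⟩ := hω
    have : X0 ω = L := hL.liminf_eq
    rw [this]; exact hL
  -- midpoint convexity of K
  have Kmid : ∀ a b : Ω → ℝ≥0∞, Measurable a → Measurable b →
      K (fun ω => (a ω + b ω)/2) ≤ (K a + K b)/2 := by
    intro a b ha hb
    calc ∫⁻ ω, psi m ((a ω + b ω)/2) ∂μ
        ≤ ∫⁻ ω, (psi m (a ω) + psi m (b ω))/2 ∂μ :=
          lintegral_mono (fun ω => psi_midpoint hm _ _)
      _ = (K a + K b)/2 := lintegral_mid μ (measurable_psi.comp ha) (measurable_psi.comp hb)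
  have hbound : ∀ k, K (g k) ≤ km + 1/((k:ℝ≥0∞)+1) := by
    intro k
    have main : ∀ {h}, MidCl {h | ∃ j, k ≤ j ∧ h = f j} h → K h ≤ km + 1/((k:ℝ≥0∞)+1) := by
      intro h hh
      induction hh with
      | base hb =>
          obtain ⟨j, hj, rfl⟩ := hb
          refine le_trans (hfK j) (add_le_add le_rfl ?_)
          have hc : ((k:ℝ≥0∞)+1) ≤ ((j:ℝ≥0∞)+1) := by
            have : ((k:ℕ):ℝ≥0∞) ≤ ((j:ℕ):ℝ≥0∞) := by exact_mod_cast Nat.cast_le.mpr hj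
            exact add_le_add this le_rfl
          gcongr
      | mid ha hb iha ihb =>
          have hameas := MidCl.measurable (by rintro h' ⟨j, -, rfl⟩; exact (hfE j).1) ha
          have hbmeas := MidCl.measurable (by rintro h' ⟨j, -, rfl⟩; exact (hfE j).1) hb
          refine le_trans (Kmid _ _ hameas hbmeas) ?_
          calc (K _ + K _)/2 ≤ ((km + 1/((k:ℝ≥0∞)+1)) + (km + 1/((k:ℝ≥0∞)+1)))/2 := by
                gcongr
            _ = km + 1/((k:ℝ≥0∞)+1) := by
                rw [← two_mul, mul_comm, mul_div_assoc,
                  ENNReal.div_self two_ne_zero ENNReal.ofNat_ne_top, mul_one]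
    exact main (hgMid k)
  have hfatou : K X0 ≤ liminf (fun k => K (g k)) atTop := by
    have hmeas : ∀ k, Measurable fun ω => psi m (g k ω) :=
      fun k => measurable_psi.comp (hgMeas k)
    have h1 : ∫⁻ ω, liminf (fun k => psi m (g k ω)) atTop ∂μ
        ≤ liminf (fun k => ∫⁻ ω, psi m (g k ω) ∂μ) atTop := lintegral_liminf_le hmeas
    refine le_trans (le_of_eq ?_) h1
    apply lintegral_congr_ae
    filter_upwards [hconv'] with ω hω
    exact ((psi_tendsto hm hω).liminf_eq).symm
  have hlim : liminf (fun k : ℕ => km + 1/((k:ℝ≥0∞)+1)) atTop = km := by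
    have h2 : Tendsto (fun k : ℕ => km + 1/((k:ℝ≥0∞)+1)) atTop (𝓝 (km + 0)) := by
      apply tendsto_const_nhds.add
      have h3 := ENNReal.tendsto_inv_nat_nhds_zero.comp (tendsto_add_atTop_nat 1)
      apply h3.congr
      intro k
      simp [Function.comp, one_div]
    rw [add_zero] at h2
    exact h2.liminf_eq
  have hK_X0 : K X0 ≤ km := by
    calc K X0 ≤ liminf (fun k => K (g k)) atTop := hfatou
      _ ≤ liminf (fun k : ℕ => km + 1/((k:ℝ≥0∞)+1)) atTop :=
          liminf_le_liminf (Eventually.of_forall hbound)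
      _ = km := hlim
  exact ⟨X0, hX0E, fun X hX => le_trans hK_X0 (hkm_le X hX)⟩



/-- First-order condition for a minimizer of `∫ psi m (X ·) dμ` over e-variables. -/
lemma foc (Pfam : Set (Measure Ω)) (Q : Measure Ω) [IsProbabilityMeasure Q]
    (μ : Measure Ω) [IsFiniteMeasure μ]
    {m : ℝ} (hm : 1 ≤ m)
    (X0 : Ω → ℝ≥0∞) (hX0 : IsEVar Pfam X0)
    (hmin : ∀ X, IsEVar Pfam X → ∫⁻ ω, psi m (X0 ω) ∂μ ≤ ∫⁻ ω, psi m (X ω) ∂μ)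
    (hfin : ∫⁻ ω, psi m (X0 ω) ∂μ ≠ ⊤)
    (Y : Ω → ℝ≥0∞) (hY : IsEVar Pfam Y) (hYfin : ∀ᵐ ω ∂μ, Y ω ≠ ⊤) :
    ∫⁻ ω, (if X0 ω < ENNReal.ofReal m then min (Y ω) (ENNReal.ofReal m) / X0 ω else 0) ∂μ
      ≤ μ univ := by
  classical
  have hX0pos : ∀ᵐ ω ∂μ, X0 ω ≠ 0 := by
    filter_upwards [ae_lt_top (measurable_psi.comp hX0.1) hfin] with ω hω
    intro h0
    rw [Function.comp_apply, h0, psi_zero] at hω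
    exact absurd hω (lt_irrefl _)
  set t : ℕ → ℝ := fun j => 1/((j:ℝ)+2) with htdef
  have ht0 : ∀ j, 0 < t j := by intro j; positivity
  have ht1 : ∀ j, t j < 1 := by
    intro j
    rw [htdef]
    rw [div_lt_one (by positivity)]
    have : (0:ℝ) ≤ (j:ℝ) := Nat.cast_nonneg j
    linarith
  have ht1' : ∀ j, 0 < 1 - t j := fun j => by linarith [ht1 j]
  have httend : Tendsto t atTop (𝓝 0) := by
    have h3 := (tendsto_one_div_add_atTop_nhds_zero_nat (𝕜 := ℝ)).comp (tendsto_add_atTop_nat 1)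
    apply h3.congr
    intro j
    simp only [Function.comp_apply, htdef]
    push_cast
    ring_nf
  set Xt : ℕ → Ω → ℝ≥0∞ := fun j ω =>
    ENNReal.ofReal (1 - t j) * X0 ω + ENNReal.ofReal (t j) * Y ω with hXt
  have hXtmeas : ∀ j, Measurable (Xt j) := fun j =>
    (hX0.1.const_mul _).add (hY.1.const_mul _)
  have hXtE : ∀ j, IsEVar Pfam (Xt j) := by
    intro j
    refine ⟨hXtmeas j, fun P hP => ?_⟩
    rw [hXt]
    simp only []
    rw [lintegral_add_left (hX0.1.const_mul _), lintegral_const_mul _ hX0.1,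
      lintegral_const_mul _ hY.1]
    calc ENNReal.ofReal (1 - t j) * ∫⁻ ω, X0 ω ∂P + ENNReal.ofReal (t j) * ∫⁻ ω, Y ω ∂P
        ≤ ENNReal.ofReal (1 - t j) * 1 + ENNReal.ofReal (t j) * 1 := by
          gcongr
          exacts [hX0.2 P hP, hY.2 P hP]
      _ = 1 := by
          rw [mul_one, mul_one, ← ENNReal.ofReal_add (by linarith [ht1 j]) (le_of_lt (ht0 j))]
          norm_num
  set oc : ℕ → ℝ≥0∞ := fun j => ENNReal.ofReal (- Real.log (1 - t j)) with hoc
  have hψXt_le : ∀ j ω, psi m (Xt j ω) ≤ psi m (X0 ω) + oc j := by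
    intro j ω
    have h1 : ENNReal.ofReal (1 - t j) * X0 ω ≤ Xt j ω := le_add_right le_rfl
    calc psi m (Xt j ω) ≤ psi m (ENNReal.ofReal (1 - t j) * X0 ω) := psi_antitone hm h1
      _ ≤ psi m (X0 ω) + oc j := psi_smul_le hm (ht1' j) (by linarith [ht0 j]) _
  have hψXtfin : ∀ j, ∫⁻ ω, psi m (Xt j ω) ∂μ ≠ ⊤ := by
    intro j
    have h1 : ∫⁻ ω, psi m (Xt j ω) ∂μ ≤ ∫⁻ ω, psi m (X0 ω) ∂μ + oc j * μ univ := by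
      calc ∫⁻ ω, psi m (Xt j ω) ∂μ ≤ ∫⁻ ω, (psi m (X0 ω) + oc j) ∂μ :=
            lintegral_mono (fun ω => hψXt_le j ω)
        _ = ∫⁻ ω, psi m (X0 ω) ∂μ + oc j * μ univ := by
            rw [lintegral_add_right _ measurable_const, lintegral_const]
    intro htop
    rw [htop] at h1
    have : (⊤:ℝ≥0∞) < ⊤ := lt_of_le_of_lt h1 (by
      apply ENNReal.add_lt_top.mpr
      constructor
      · exact lt_of_le_of_ne le_top hfin
      · exact ENNReal.mul_lt_top ENNReal.ofReal_lt_top (measure_lt_top μ univ))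
    exact absurd this (lt_irrefl _)
  -- the basic integral inequality, divided by t j
  set G : ℕ → Ω → ℝ≥0∞ := fun j ω =>
    ((psi m (X0 ω) + oc j) - psi m (Xt j ω)) / ENNReal.ofReal (t j) with hG
  have hGmeas : ∀ j, Measurable (G j) := fun j =>
    (((measurable_psi.comp hX0.1).add measurable_const).sub
      (measurable_psi.comp (hXtmeas j))).div measurable_const
  have hGint : ∀ j, ∫⁻ ω, G j ω ∂μ ≤ oc j / ENNReal.ofReal (t j) * μ univ := by
    intro j
    have hsub : ∫⁻ ω, ((psi m (X0 ω) + oc j) - psi m (Xt j ω)) ∂μ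
        = (∫⁻ ω, (psi m (X0 ω) + oc j) ∂μ) - ∫⁻ ω, psi m (Xt j ω) ∂μ := by
      apply lintegral_sub (measurable_psi.comp (hXtmeas j)) (hψXtfin j)
      exact ae_of_all _ (fun ω => hψXt_le j ω)
    have hadd : ∫⁻ ω, (psi m (X0 ω) + oc j) ∂μ = ∫⁻ ω, psi m (X0 ω) ∂μ + oc j * μ univ := by
      rw [lintegral_add_right _ measurable_const, lintegral_const]
    have hnum : ∫⁻ ω, ((psi m (X0 ω) + oc j) - psi m (Xt j ω)) ∂μ ≤ oc j * μ univ := by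
      rw [hsub, hadd, tsub_le_iff_right]
      rw [add_comm (oc j * μ univ)]
      exact add_le_add (hmin (Xt j) (hXtE j)) le_rfl
    calc ∫⁻ ω, G j ω ∂μ
        = (∫⁻ ω, ((psi m (X0 ω) + oc j) - psi m (Xt j ω)) ∂μ) / ENNReal.ofReal (t j) := by
          rw [hG]
          simp only [div_eq_mul_inv]
          rw [lintegral_mul_const' _ _ (by
            simp [ENNReal.inv_ne_top, ENNReal.ofReal_eq_zero]
            linarith [ht0 j])]
      _ ≤ (oc j * μ univ) / ENNReal.ofReal (t j) := by gcongr
      _ = oc j / ENNReal.ofReal (t j) * μ univ := by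
          rw [div_eq_mul_inv, div_eq_mul_inv]
          ring
  -- limit of the right-hand side
  have hoc_t : Tendsto (fun j => oc j / ENNReal.ofReal (t j)) atTop (𝓝 1) := by
    have h1 : HasDerivAt (fun u : ℝ => 1 - u) (-1) 0 := (hasDerivAt_id 0).const_sub 1
    have h2 : HasDerivAt (fun u : ℝ => Real.log (1 - u)) (-1 / (1 - 0)) 0 :=
      h1.log (by norm_num)
    have hF0 : HasDerivAt (fun u : ℝ => - Real.log (1 - u)) 1 0 := by
      have h3 := h2.neg
      exact h3.congr_deriv (by norm_num)
    have hslope := hasDerivAt_iff_tendsto_slope.mp hF0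
    have htt : Tendsto t atTop (𝓝[≠] (0:ℝ)) :=
      tendsto_nhdsWithin_of_tendsto_nhds_of_eventually_within _ httend
        (Eventually.of_forall (fun j => ne_of_gt (ht0 j)))
    have hcomp := hslope.comp htt
    have hsl : ∀ j, slope (fun u : ℝ => - Real.log (1 - u)) 0 (t j)
        = (- Real.log (1 - t j))/(t j) := by
      intro j
      rw [slope_def_field]
      norm_num
    have hER : Tendsto (fun j => ENNReal.ofReal ((- Real.log (1 - t j))/(t j))) atTop
        (𝓝 (ENNReal.ofReal 1)) := by
      apply (ENNReal.continuous_ofReal.tendsto _).comp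
      apply hcomp.congr
      intro j
      rw [Function.comp_apply, hsl j]
    have heq : ∀ j, ENNReal.ofReal ((- Real.log (1 - t j))/(t j))
        = oc j / ENNReal.ofReal (t j) := by
      intro j
      rw [ENNReal.ofReal_div_of_pos (ht0 j)]
    rw [show (1:ℝ≥0∞) = ENNReal.ofReal 1 by simp]
    apply hER.congr
    intro j; rw [heq j]
  have hRHS : Tendsto (fun j => oc j / ENNReal.ofReal (t j) * μ univ) atTop (𝓝 (μ univ)) := by
    have h6 := ENNReal.Tendsto.mul_const (b := μ univ) hoc_t (Or.inl one_ne_zero)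
    rwa [one_mul] at h6
  -- pointwise lower bound for the liminf
  have hpt : ∀ᵐ ω ∂μ,
      (if X0 ω < ENNReal.ofReal m then min (Y ω) (ENNReal.ofReal m) / X0 ω else 0)
        ≤ liminf (fun j => G j ω) atTop := by
    filter_upwards [hX0pos, hYfin] with ω hX0ω hYω
    by_cases hlt : X0 ω < ENNReal.ofReal m
    swap
    · rw [if_neg hlt]; exact zero_le
    rw [if_pos hlt]
    have hX0t : X0 ω ≠ ⊤ := ne_top_of_lt hlt
    set x : ℝ := (X0 ω).toReal with hx
    set y : ℝ := (Y ω).toReal with hy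
    have hxpos : 0 < x := ENNReal.toReal_pos hX0ω hX0t
    have hynn : 0 ≤ y := ENNReal.toReal_nonneg
    have hxm : x < m := (ENNReal.lt_ofReal_iff_toReal_lt hX0t).mp hlt
    set F : ℝ → ℝ := fun u => Real.log ((1-u)*x + u*y) - Real.log x - Real.log (1 - u) with hF
    have hd1 : HasDerivAt (fun u : ℝ => (1-u)*x + u*y) (-1*x + 1*y) 0 :=
      (((hasDerivAt_id 0).const_sub 1).mul_const x).add ((hasDerivAt_id 0).mul_const y)
    have hne : (1-(0:ℝ))*x + 0*y ≠ 0 := by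
      simp only [sub_zero, one_mul, zero_mul, add_zero]
      exact ne_of_gt hxpos
    have hd2 : HasDerivAt (fun u : ℝ => Real.log ((1-u)*x + u*y))
        ((-1*x + 1*y)/((1-(0:ℝ))*x + 0*y)) 0 := hd1.log hne
    have hd3 : HasDerivAt (fun u : ℝ => Real.log (1 - u)) (-1/(1-(0:ℝ))) 0 :=
      ((hasDerivAt_id 0).const_sub 1).log (by norm_num)
    have hdF : HasDerivAt F (y/x) 0 := by
      have h4 := (hd2.sub_const (Real.log x)).sub hd3
      exact h4.congr_deriv (by field_simp; ring)
    have hslope := hasDerivAt_iff_tendsto_slope.mp hdF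
    have htt : Tendsto t atTop (𝓝[≠] (0:ℝ)) :=
      tendsto_nhdsWithin_of_tendsto_nhds_of_eventually_within _ httend
        (Eventually.of_forall (fun j => ne_of_gt (ht0 j)))
    have hcomp := hslope.comp htt
    have hF00 : F 0 = 0 := by
      rw [hF]
      simp
    have hsl : ∀ j, slope F 0 (t j) = F (t j)/(t j) := by
      intro j; rw [slope_def_field, hF00, sub_zero, sub_zero]
    have hXtω_fin : ∀ j, Xt j ω ≠ ⊤ := by
      intro j
      rw [hXt]; simp only []
      exact ENNReal.add_ne_top.mpr ⟨ENNReal.mul_ne_top ENNReal.ofReal_ne_top hX0t,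
        ENNReal.mul_ne_top ENNReal.ofReal_ne_top hYω⟩
    have hXtω_pos : ∀ j, Xt j ω ≠ 0 := by
      intro j
      rw [hXt]; simp only []
      intro hzero
      rw [add_eq_zero] at hzero
      have h5 := hzero.1
      rw [mul_eq_zero] at h5
      rcases h5 with h5 | h5
      · rw [ENNReal.ofReal_eq_zero] at h5; linarith [ht1' j]
      · exact hX0ω h5
    have hXtReal : ∀ j, (Xt j ω).toReal = (1 - t j)*x + (t j)*y := by
      intro j
      rw [hXt]; simp only []
      rw [ENNReal.toReal_add (ENNReal.mul_ne_top ENNReal.ofReal_ne_top hX0t)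
        (ENNReal.mul_ne_top ENNReal.ofReal_ne_top hYω),
        ENNReal.toReal_mul, ENNReal.toReal_mul,
        ENNReal.toReal_ofReal (le_of_lt (ht1' j)), ENNReal.toReal_ofReal (le_of_lt (ht0 j))]
    have hXtconv : Tendsto (fun j => (1 - t j)*x + (t j)*y) atTop (𝓝 ((1-0)*x + 0*y)) :=
      ((tendsto_const_nhds.sub httend).mul_const x).add (httend.mul_const y)
    have hevlt : ∀ᶠ j in atTop, (1 - t j)*x + (t j)*y < m := by
      apply hXtconv.eventually (eventually_lt_nhds ?_)
      simpa using hxm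
    have hGeq : ∀ᶠ j in atTop, G j ω = ENNReal.ofReal (slope F 0 (t j)) := by
      filter_upwards [hevlt] with j hj
      have hXtb : Xt j ω < ENNReal.ofReal m := by
        rw [ENNReal.lt_ofReal_iff_toReal_lt (hXtω_fin j), hXtReal j]
        exact hj
      have hminX0 : min (X0 ω) (ENNReal.ofReal m) = X0 ω := min_eq_left (le_of_lt hlt)
      have hminXt : min (Xt j ω) (ENNReal.ofReal m) = Xt j ω := min_eq_left (le_of_lt hXtb)
      have hp0 : (psi m (X0 ω)).toReal = Real.log m - Real.log x := by
        rw [psi_toReal hm hX0ω, hminX0]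
      have hpj : (psi m (Xt j ω)).toReal = Real.log m - Real.log ((1 - t j)*x + (t j)*y) := by
        rw [psi_toReal hm (hXtω_pos j), hminXt, hXtReal j]
      have hpjnn : 0 ≤ (psi m (Xt j ω)).toReal := ENNReal.toReal_nonneg
      have hcnn : 0 ≤ - Real.log (1 - t j) := by
        rw [neg_nonneg]
        apply Real.log_nonpos (by linarith [ht1' j]) (by linarith [ht0 j])
      have hstep1 : psi m (X0 ω) + oc j
          = ENNReal.ofReal ((psi m (X0 ω)).toReal + (- Real.log (1 - t j))) := by
        rw [ENNReal.ofReal_add ENNReal.toReal_nonneg hcnn,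
          ENNReal.ofReal_toReal (psi_ne_top hX0ω)]
      have hstep2 : (psi m (X0 ω) + oc j) - psi m (Xt j ω)
          = ENNReal.ofReal ((psi m (X0 ω)).toReal + (- Real.log (1 - t j))
              - (psi m (Xt j ω)).toReal) := by
        rw [ENNReal.ofReal_sub _ hpjnn, ← hstep1, ENNReal.ofReal_toReal (psi_ne_top (hXtω_pos j))]
      rw [hG]; simp only []
      rw [hstep2, ← ENNReal.ofReal_div_of_pos (ht0 j)]
      congr 1
      rw [hsl j, hp0, hpj, hF]
      ring
    have hGt : Tendsto (fun j => G j ω) atTop (𝓝 (ENNReal.ofReal (y/x))) := by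
      have hT := (ENNReal.continuous_ofReal.tendsto _).comp hcomp
      have hT2 : Tendsto (fun j => ENNReal.ofReal (slope F 0 (t j))) atTop
          (𝓝 (ENNReal.ofReal (y/x))) := hT
      exact hT2.congr' (by filter_upwards [hGeq] with j hj; rw [hj])
    rw [hGt.liminf_eq]
    have hYX : ENNReal.ofReal (y/x) = Y ω / X0 ω := by
      rw [ENNReal.ofReal_div_of_pos hxpos, ENNReal.ofReal_toReal hYω, ENNReal.ofReal_toReal hX0t]
    rw [hYX]
    gcongr
    exact min_le_left _ _
  calc ∫⁻ ω, (if X0 ω < ENNReal.ofReal m then min (Y ω) (ENNReal.ofReal m) / X0 ω else 0) ∂μ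
      ≤ ∫⁻ ω, liminf (fun j => G j ω) atTop ∂μ := lintegral_mono_ae hpt
    _ ≤ liminf (fun j => ∫⁻ ω, G j ω ∂μ) atTop := lintegral_liminf_le hGmeas
    _ ≤ liminf (fun j => oc j / ENNReal.ofReal (t j) * μ univ) atTop :=
        liminf_le_liminf (Eventually.of_forall hGint)
    _ = μ univ := hRHS.liminf_eq



lemma tsum_half_pow : ∑' (n:ℕ), (2:ℝ≥0∞)⁻¹^(n+1) = 1 := by
  simp only [pow_succ]
  rw [ENNReal.tsum_mul_right, ENNReal.tsum_geometric]
  rw [ENNReal.one_sub_inv_two, inv_inv]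
  exact ENNReal.mul_inv_cancel two_ne_zero ENNReal.ofNat_ne_top

/-- Theorem (existence of the numeraire): for any nonempty set `Pfam` of probability
measures and any probability measure `Q`, a numeraire exists. -/
theorem numeraire_exists (Pfam : Set (Measure Ω)) (hne : Pfam.Nonempty)
    (hprob : ∀ P ∈ Pfam, IsProbabilityMeasure P)
    (Q : Measure Ω) [IsProbabilityMeasure Q] :
    ∃ Xs : Ω → ℝ≥0∞, IsNumeraire Pfam Q Xs := by
  classical
  -- Phase 1 : the maximal singular set S
  set 𝔄 : Set (Set Ω) := {A | MeasurableSet A ∧ ∃ X, IsEVar Pfam X ∧ ∀ ω ∈ A, X ω = ⊤}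
    with h𝔄
  have hempty𝔄 : (∅ : Set Ω) ∈ 𝔄 :=
    ⟨MeasurableSet.empty, ⟨fun _ => 1, isEVar_one Pfam hprob, fun ω hω => absurd hω (by simp)⟩⟩
  set α : ℝ≥0∞ := ⨆ (A : 𝔄), Q A.val with hα
  have hαle : α ≤ 1 := by
    rw [hα]
    apply iSup_le
    intro A
    exact le_trans (measure_mono (subset_univ _)) (le_of_eq measure_univ)
  have hAsel : ∀ n : ℕ, ∃ A, A ∈ 𝔄 ∧ α ≤ Q A + ((n:ℝ≥0∞)+1)⁻¹ := by
    intro n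
    by_cases hsmall : α ≤ ((n:ℝ≥0∞)+1)⁻¹
    · exact ⟨∅, hempty𝔄, by simpa using hsmall⟩
    · push_neg at hsmall
      have hα0 : α ≠ 0 := by
        intro h0; rw [h0] at hsmall; exact absurd hsmall (by simp)
      have hlt : α - ((n:ℝ≥0∞)+1)⁻¹ < α := by
        apply ENNReal.sub_lt_self (ne_top_of_le_ne_top ENNReal.one_ne_top hαle) hα0
        simp
      rw [hα, lt_iSup_iff] at hlt
      obtain ⟨⟨A, hA⟩, hAlt⟩ := hlt
      exact ⟨A, hA, tsub_le_iff_right.mp (le_of_lt hAlt)⟩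
  choose A hA𝔄 hAα using hAsel
  choose XA hXAE hXAtop using fun n => (hA𝔄 n).2
  set S : Set Ω := ⋃ n, A n with hS
  have hSmeas : MeasurableSet S := MeasurableSet.iUnion (fun n => (hA𝔄 n).1)
  set Xinf : Ω → ℝ≥0∞ := fun ω => ∑' n, (2:ℝ≥0∞)⁻¹^(n+1) * XA n ω with hXinf
  have hXinfmeas : Measurable Xinf :=
    Measurable.ennreal_tsum (fun n => ((hXAE n).1.const_mul _))
  have hXinfE : IsEVar Pfam Xinf := by
    refine ⟨hXinfmeas, fun P hP => ?_⟩
    rw [hXinf]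
    simp only []
    rw [lintegral_tsum (fun n => ((hXAE n).1.const_mul _).aemeasurable)]
    calc ∑' n, ∫⁻ ω, (2:ℝ≥0∞)⁻¹^(n+1) * XA n ω ∂P
        = ∑' n, (2:ℝ≥0∞)⁻¹^(n+1) * ∫⁻ ω, XA n ω ∂P := by
          congr 1; funext n; exact lintegral_const_mul _ (hXAE n).1
      _ ≤ ∑' n, (2:ℝ≥0∞)⁻¹^(n+1) * 1 := by
          apply ENNReal.tsum_le_tsum
          intro n
          exact mul_le_mul_right ((hXAE n).2 P hP) _
      _ = 1 := by
          simp only [mul_one]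
          exact tsum_half_pow
  have hXinftop : ∀ ω ∈ S, Xinf ω = ⊤ := by
    intro ω hω
    obtain ⟨n, hn⟩ := mem_iUnion.mp hω
    apply eq_top_iff.mpr
    calc (⊤:ℝ≥0∞) = (2:ℝ≥0∞)⁻¹^(n+1) * XA n ω := by
          rw [hXAtop n ω hn, ENNReal.mul_top (pow_ne_zero _ (ENNReal.inv_ne_zero.mpr ENNReal.ofNat_ne_top))]
      _ ≤ Xinf ω := ENNReal.le_tsum n
  have hPS : ∀ P ∈ Pfam, P S = 0 := by
    intro P hP
    have h1 : ∀ᵐ ω ∂P, Xinf ω < ⊤ :=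
      ae_lt_top hXinfmeas (ne_of_lt (lt_of_le_of_lt (hXinfE.2 P hP) ENNReal.one_lt_top))
    have h2 : P {ω | ¬ Xinf ω < ⊤} = 0 := ae_iff.mp h1
    apply measure_mono_null _ h2
    intro ω hω
    simp only [mem_setOf_eq, not_lt, top_le_iff]
    exact hXinftop ω hω
  have hQS : α ≤ Q S := by
    apply ENNReal.le_of_forall_pos_le_add
    intro ε hε hQStop
    obtain ⟨n, hn⟩ := ENNReal.exists_inv_nat_lt (ne_of_gt (ENNReal.coe_pos.mpr hε))
    calc α ≤ Q (A n) + ((n:ℝ≥0∞)+1)⁻¹ := hAα n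
      _ ≤ Q S + ε := by
        gcongr
        · exact subset_iUnion A n
        · calc ((n:ℝ≥0∞)+1)⁻¹ ≤ ((n:ℝ≥0∞))⁻¹ := by gcongr; exact le_self_add
            _ ≤ ε := le_of_lt hn
  have hSmax : ∀ X, IsEVar Pfam X → Q ({ω | X ω = ⊤} \ S) = 0 := by
    intro X hXE
    have hXtopmeas : MeasurableSet {ω | X ω = ⊤} := hXE.1 (measurableSet_singleton ⊤)
    have hA'𝔄 : S ∪ {ω | X ω = ⊤} ∈ 𝔄 := by
      refine ⟨hSmeas.union hXtopmeas, ⟨fun ω => (Xinf ω + X ω)/2, ?_, ?_⟩⟩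
      · refine ⟨(hXinfmeas.add hXE.1).div_const 2, fun P hP => ?_⟩
        rw [lintegral_mid P hXinfmeas hXE.1]
        calc (∫⁻ ω, Xinf ω ∂P + ∫⁻ ω, X ω ∂P) / 2 ≤ (1+1)/2 := by
              gcongr
              exacts [hXinfE.2 P hP, hXE.2 P hP]
          _ = 1 := by
              rw [one_add_one_eq_two]
              exact ENNReal.div_self two_ne_zero ENNReal.ofNat_ne_top
      · intro ω hω
        show (Xinf ω + X ω)/2 = ⊤
        rcases hω with hω | hω
        · rw [hXinftop ω hω]
          rw [show (⊤:ℝ≥0∞) + X ω = ⊤ by simp]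
          simp [ENNReal.div_eq_top]
        · rw [mem_setOf_eq] at hω
          rw [hω]
          rw [show Xinf ω + (⊤:ℝ≥0∞) = ⊤ by simp]
          simp [ENNReal.div_eq_top]
    have h1 : Q (S ∪ {ω | X ω = ⊤}) ≤ α := le_iSup (fun A : 𝔄 => Q A.val) ⟨_, hA'𝔄⟩
    have h2 : Q (S ∪ {ω | X ω = ⊤}) = Q S + Q ({ω | X ω = ⊤} \ S) := by
      rw [← union_diff_self]
      exact measure_union disjoint_sdiff_right (hXtopmeas.diff hSmeas)
    have h3 : Q S + Q ({ω | X ω = ⊤} \ S) ≤ Q S + 0 := by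
      rw [add_zero]
      exact le_trans (le_of_eq h2.symm) (le_trans h1 hQS)
    have h4 := (ENNReal.add_le_add_iff_left (ne_of_lt (measure_lt_top Q S))).mp h3
    exact le_antisymm h4 zero_le
  -- Phase 2 : minimization on the complement of S
  set μ : Measure Ω := Q.restrict Sᶜ with hμ
  have hac : ∀ p : Ω → Prop, (∀ᵐ ω ∂Q, p ω) → (∀ᵐ ω ∂μ, p ω) := fun p hp => ae_restrict_of_ae hp
  have hμuniv : μ univ ≤ 1 := by
    rw [hμ, Measure.restrict_apply_univ]
    exact le_trans (measure_mono (subset_univ _)) (le_of_eq measure_univ)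
  have hYfinμ : ∀ Y, IsEVar Pfam Y → (∀ᵐ ω ∂μ, Y ω ≠ ⊤) := by
    intro Y hY
    have h1 : μ {ω | Y ω = ⊤} = 0 := by
      rw [hμ, Measure.restrict_apply
        (show MeasurableSet {ω | Y ω = ⊤} from hY.1 (measurableSet_singleton ⊤))]
      rw [← Set.diff_eq]
      exact hSmax Y hY
    apply ae_iff.mpr
    simpa only [ne_eq, not_not] using h1
  -- Phase 2 : truncated-log minimizers and their limit
  have hm1 : ∀ n : ℕ, (1:ℝ) ≤ (n:ℝ)+1 := fun n => by
    have := Nat.cast_nonneg (α := ℝ) n; linarith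
  choose XM hXME hXMmin using fun n : ℕ =>
    exists_psi_minimizer Pfam hprob Q μ hac (hm1 n)
  have hXMfin : ∀ n : ℕ, ∫⁻ ω, psi ((n:ℝ)+1) (XM n ω) ∂μ ≠ ⊤ := by
    intro n
    have h1 := hXMmin n (fun _ => 1) (isEVar_one Pfam hprob)
    have h2 : ∫⁻ _ω, psi ((n:ℝ)+1) ((1:ℝ≥0∞)) ∂μ
        ≤ ENNReal.ofReal (Real.log ((n:ℝ)+1)) * μ univ := by
      rw [lintegral_const]
      exact mul_le_mul_left (psi_one_le (hm1 n)) _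
    exact ne_of_lt (lt_of_le_of_lt (le_trans h1 h2)
      (ENNReal.mul_lt_top ENNReal.ofReal_lt_top (lt_of_le_of_lt hμuniv ENNReal.one_lt_top)))
  have hFOC : ∀ (Y : Ω → ℝ≥0∞), IsEVar Pfam Y → ∀ (k n : ℕ),
      (k:ℝ≥0∞) ≤ ENNReal.ofReal ((n:ℝ)+1) →
      ∫⁻ ω, min (Y ω) (k:ℝ≥0∞) / XM n ω ∂μ
        ≤ μ univ + (k:ℝ≥0∞) / ENNReal.ofReal ((n:ℝ)+1) := by
    intro Y hY k n hkn
    have hfoc := foc Pfam Q μ (hm1 n) (XM n) (hXME n) (hXMmin n) (hXMfin n) Y hY (hYfinμ Y hY)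
    set b := ENNReal.ofReal ((n:ℝ)+1) with hb
    have hpt : ∀ ω, min (Y ω) (k:ℝ≥0∞) / XM n ω
        ≤ (if XM n ω < b then min (Y ω) b / XM n ω else 0) + (k:ℝ≥0∞)/b := by
      intro ω
      by_cases hlt : XM n ω < b
      · rw [if_pos hlt]
        calc min (Y ω) (k:ℝ≥0∞) / XM n ω ≤ min (Y ω) b / XM n ω :=
              ENNReal.div_le_div (min_le_min le_rfl hkn) le_rfl
          _ ≤ _ := le_self_add
      · rw [if_neg hlt, zero_add]
        push_neg at hlt
        exact ENNReal.div_le_div (min_le_right _ _) hlt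
    calc ∫⁻ ω, min (Y ω) (k:ℝ≥0∞) / XM n ω ∂μ
        ≤ ∫⁻ ω, ((if XM n ω < b then min (Y ω) b / XM n ω else 0) + (k:ℝ≥0∞)/b) ∂μ :=
          lintegral_mono hpt
      _ = (∫⁻ ω, (if XM n ω < b then min (Y ω) b / XM n ω else 0) ∂μ) + ((k:ℝ≥0∞)/b) * μ univ := by
          rw [lintegral_add_right _ measurable_const, lintegral_const]
      _ ≤ μ univ + (k:ℝ≥0∞)/b := by
          refine add_le_add hfoc ?_
          calc ((k:ℝ≥0∞)/b) * μ univ ≤ ((k:ℝ≥0∞)/b) * 1 := mul_le_mul_right hμuniv _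
            _ = (k:ℝ≥0∞)/b := mul_one _
  obtain ⟨Z, hZmid, hZmeas, hZconv⟩ := komlos Q XM (fun n => (hXME n).1)
  set Xs' : Ω → ℝ≥0∞ := fun ω => liminf (fun i => Z i ω) atTop with hXs'
  have hXs'meas : Measurable Xs' := Measurable.liminf hZmeas
  have hZE : ∀ i, IsEVar Pfam (Z i) := fun i =>
    MidCl.isEVar (by rintro h ⟨j, -, rfl⟩; exact hXME j) (hZmid i)
  have hXs'E : IsEVar Pfam Xs' := by
    refine ⟨hXs'meas, fun P hP => ?_⟩
    calc ∫⁻ ω, Xs' ω ∂P ≤ liminf (fun i => ∫⁻ ω, Z i ω ∂P) atTop :=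
          lintegral_liminf_le (fun i => (hZE i).1)
      _ ≤ liminf (fun _ : ℕ => (1:ℝ≥0∞)) atTop :=
          liminf_le_liminf (Eventually.of_forall fun i => (hZE i).2 P hP)
      _ = 1 := liminf_const _
  have hconvμ : ∀ᵐ ω ∂μ, Tendsto (fun i => Z i ω) atTop (𝓝 (Xs' ω)) := by
    apply hac; filter_upwards [hZconv] with ω hω
    obtain ⟨L, hL⟩ := hω
    have hLe : Xs' ω = L := hL.liminf_eq
    rw [hLe]; exact hL
  have hZbound : ∀ (Y : Ω → ℝ≥0∞), IsEVar Pfam Y → ∀ (k i : ℕ), k ≤ i →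
      ∫⁻ ω, min (Y ω) (k:ℝ≥0∞) / Z i ω ∂μ ≤ μ univ + (k:ℝ≥0∞)/ENNReal.ofReal ((i:ℝ)+1) := by
    intro Y hY k i hki
    have main : ∀ {h}, MidCl {h | ∃ j, i ≤ j ∧ h = XM j} h →
        ∫⁻ ω, min (Y ω) (k:ℝ≥0∞) / h ω ∂μ ≤ μ univ + (k:ℝ≥0∞)/ENNReal.ofReal ((i:ℝ)+1) := by
      intro h hh
      induction hh with
      | base hb =>
          obtain ⟨j, hj, rfl⟩ := hb
          have hkj : (k:ℝ≥0∞) ≤ ENNReal.ofReal ((j:ℝ)+1) := by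
            have h7 : (k:ℝ) ≤ (j:ℝ)+1 := by
              have h8 := (Nat.cast_le (α := ℝ)).mpr (le_trans hki hj); linarith
            calc (k:ℝ≥0∞) = ENNReal.ofReal (k:ℝ) := (ENNReal.ofReal_natCast k).symm
              _ ≤ ENNReal.ofReal ((j:ℝ)+1) := ENNReal.ofReal_le_ofReal h7
          refine le_trans (hFOC Y hY k j hkj) ?_
          refine add_le_add le_rfl (ENNReal.div_le_div le_rfl ?_)
          apply ENNReal.ofReal_le_ofReal
          have h9 := (Nat.cast_le (α := ℝ)).mpr hj; linarith
      | @mid a b ha hb iha ihb =>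
          have hameas := MidCl.measurable (G := {h | ∃ j, i ≤ j ∧ h = XM j})
            (by rintro h' ⟨j, -, rfl⟩; exact (hXME j).1) ha
          have hbmeas := MidCl.measurable (G := {h | ∃ j, i ≤ j ∧ h = XM j})
            (by rintro h' ⟨j, -, rfl⟩; exact (hXME j).1) hb
          calc ∫⁻ ω, min (Y ω) (k:ℝ≥0∞) / ((a ω + b ω)/2) ∂μ
              ≤ ∫⁻ ω, (min (Y ω) (k:ℝ≥0∞)/ a ω + min (Y ω) (k:ℝ≥0∞)/ b ω)/2 ∂μ :=
                lintegral_mono (fun ω => div_midpoint_le _ _ _)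
            _ = ((∫⁻ ω, min (Y ω) (k:ℝ≥0∞)/ a ω ∂μ) + ∫⁻ ω, min (Y ω) (k:ℝ≥0∞)/ b ω ∂μ)/2 :=
                lintegral_mid μ ((hY.1.min measurable_const).div hameas)
                  ((hY.1.min measurable_const).div hbmeas)
            _ ≤ ((μ univ + (k:ℝ≥0∞)/ENNReal.ofReal ((i:ℝ)+1))
                  + (μ univ + (k:ℝ≥0∞)/ENNReal.ofReal ((i:ℝ)+1)))/2 :=
                ENNReal.div_le_div (add_le_add iha ihb) le_rfl
            _ = μ univ + (k:ℝ≥0∞)/ENNReal.ofReal ((i:ℝ)+1) := by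
                rw [← two_mul, mul_comm, mul_div_assoc,
                  ENNReal.div_self two_ne_zero ENNReal.ofNat_ne_top, mul_one]
    exact main (hZmid i)
  have hXs'bound : ∀ (Y : Ω → ℝ≥0∞), IsEVar Pfam Y → ∀ k : ℕ,
      ∫⁻ ω, min (Y ω) (k:ℝ≥0∞) / Xs' ω ∂μ ≤ μ univ := by
    intro Y hY k
    have hptconv : ∀ᵐ ω ∂μ, Tendsto (fun i => min (Y ω) (k:ℝ≥0∞) / Z i ω) atTop
        (𝓝 (min (Y ω) (k:ℝ≥0∞) / Xs' ω)) := by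
      filter_upwards [hconvμ] with ω hω
      rcases eq_or_ne (min (Y ω) (k:ℝ≥0∞)) 0 with h0 | h0
      · rw [h0]
        simpa [ENNReal.zero_div] using (tendsto_const_nhds :
          Tendsto (fun _ : ℕ => (0:ℝ≥0∞)) atTop (𝓝 0))
      · have hc : min (Y ω) (k:ℝ≥0∞) ≠ ⊤ :=
          ne_top_of_le_ne_top (ENNReal.natCast_ne_top k) (min_le_right _ _)
        have hinv : Tendsto (fun i => (Z i ω)⁻¹) atTop (𝓝 (Xs' ω)⁻¹) := hω.inv
        have hmul := ENNReal.Tendsto.const_mul hinv (Or.inr hc)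
        simpa [div_eq_mul_inv] using hmul
    have hFat : ∫⁻ ω, min (Y ω) (k:ℝ≥0∞) / Xs' ω ∂μ
        ≤ liminf (fun i => ∫⁻ ω, min (Y ω) (k:ℝ≥0∞) / Z i ω ∂μ) atTop := by
      have hmeas : ∀ i, Measurable fun ω => min (Y ω) (k:ℝ≥0∞) / Z i ω :=
        fun i => (hY.1.min measurable_const).div (hZmeas i)
      refine le_trans (le_of_eq ?_) (lintegral_liminf_le hmeas)
      apply lintegral_congr_ae
      filter_upwards [hptconv] with ω hω
      exact hω.liminf_eq.symm
    refine le_trans hFat ?_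
    have hBi : Tendsto (fun i : ℕ => μ univ + (k:ℝ≥0∞)/ENNReal.ofReal ((i:ℝ)+1)) atTop
        (𝓝 (μ univ + 0)) := by
      apply tendsto_const_nhds.add
      have h10 : Tendsto (fun i : ℕ => ENNReal.ofReal ((i:ℝ)+1)) atTop (𝓝 ⊤) := by
        have h11 : ∀ i : ℕ, ENNReal.ofReal ((i:ℝ)+1) = ((i+1 : ℕ) : ℝ≥0∞) := by
          intro i
          rw [← ENNReal.ofReal_natCast (i+1)]
          congr 1
          push_cast
          ring
        have h12 := tendsto_nat_nhds_top.comp (tendsto_add_atTop_nat 1)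
        apply h12.congr
        intro i
        rw [Function.comp_apply, h11]
      have h13 : Tendsto (fun i : ℕ => (ENNReal.ofReal ((i:ℝ)+1))⁻¹) atTop (𝓝 0) := by
        have := h10.inv
        rwa [ENNReal.inv_top] at this
      have h14 := ENNReal.Tendsto.const_mul h13 (Or.inr (ENNReal.natCast_ne_top k))
      rw [mul_zero] at h14
      apply h14.congr
      intro i
      rw [div_eq_mul_inv]
    calc liminf (fun i => ∫⁻ ω, min (Y ω) (k:ℝ≥0∞) / Z i ω ∂μ) atTop
        ≤ liminf (fun i : ℕ => μ univ + (k:ℝ≥0∞)/ENNReal.ofReal ((i:ℝ)+1)) atTop :=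
          liminf_le_liminf (by
            filter_upwards [eventually_ge_atTop k] with i hi
            exact hZbound Y hY k i hi)
      _ = μ univ + 0 := hBi.liminf_eq
      _ = μ univ := add_zero _
  have hERatioμ : ∀ (Y : Ω → ℝ≥0∞), IsEVar Pfam Y →
      ∫⁻ ω, ERatio (Y ω) (Xs' ω) ∂μ ≤ μ univ := by
    intro Y hY
    have hsup : ∀ᵐ ω ∂μ, ERatio (Y ω) (Xs' ω) ≤ ⨆ k : ℕ, min (Y ω) (k:ℝ≥0∞) / Xs' ω := by
      filter_upwards [hYfinμ Y hY] with ω hYω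
      have hE : ERatio (Y ω) (Xs' ω) = Y ω / Xs' ω := by
        rw [ERatio, if_neg (fun hcon => hYω hcon.1)]
      rw [hE]
      obtain ⟨kk, hkk⟩ := ENNReal.exists_nat_gt hYω
      calc Y ω / Xs' ω = min (Y ω) (kk:ℝ≥0∞) / Xs' ω := by
            rw [min_eq_left (le_of_lt hkk)]
        _ ≤ ⨆ k : ℕ, min (Y ω) (k:ℝ≥0∞) / Xs' ω := le_iSup (fun k : ℕ => min (Y ω) ((k:ℕ):ℝ≥0∞) / Xs' ω) kk
    calc ∫⁻ ω, ERatio (Y ω) (Xs' ω) ∂μ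
        ≤ ∫⁻ ω, ⨆ k : ℕ, min (Y ω) (k:ℝ≥0∞) / Xs' ω ∂μ := lintegral_mono_ae hsup
      _ = ⨆ k : ℕ, ∫⁻ ω, min (Y ω) (k:ℝ≥0∞) / Xs' ω ∂μ := by
          refine lintegral_iSup (fun k => (hY.1.min measurable_const).div hXs'meas) ?_
          intro k k' hkk'
          intro ω
          exact ENNReal.div_le_div (min_le_min le_rfl (Nat.cast_le.mpr hkk')) le_rfl
      _ ≤ μ univ := iSup_le (fun k => hXs'bound Y hY k)
  have hXs'pos : ∀ᵐ ω ∂μ, Xs' ω ≠ 0 := by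
    have h1 := hERatioμ (fun _ => 1) (isEVar_one Pfam hprob)
    have h2 : ∫⁻ ω, ERatio 1 (Xs' ω) ∂μ ≠ ⊤ :=
      ne_of_lt (lt_of_le_of_lt h1 (lt_of_le_of_lt hμuniv ENNReal.one_lt_top))
    have h3 := ae_lt_top (measurable_ERatio measurable_const hXs'meas) h2
    filter_upwards [h3] with ω hω hzero
    rw [hzero, ERatio, if_neg (by simp), ENNReal.div_zero one_ne_zero] at hω
    exact absurd hω (lt_irrefl _)
  set Xs : Ω → ℝ≥0∞ := fun ω => if ω ∈ S then ⊤ else Xs' ω with hXsdef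
  have hXsmeas : Measurable Xs := Measurable.ite hSmeas measurable_const hXs'meas
  have hXsE : IsEVar Pfam Xs := by
    refine ⟨hXsmeas, fun P hP => ?_⟩
    have hPae : ∀ᵐ ω ∂P, ω ∉ S := by
      apply ae_iff.mpr
      simpa only [not_not, setOf_mem_eq] using hPS P hP
    have heq : ∫⁻ ω, Xs ω ∂P = ∫⁻ ω, Xs' ω ∂P := by
      apply lintegral_congr_ae
      filter_upwards [hPae] with ω hω
      rw [hXsdef]; simp only [if_neg hω]
    rw [heq]; exact hXs'E.2 P hP
  have hXspos : ∀ᵐ ω ∂Q, 0 < Xs ω := by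
    have h4 := (ae_restrict_iff' hSmeas.compl).mp hXs'pos
    filter_upwards [h4] with ω hω
    by_cases hωS : ω ∈ S
    · rw [hXsdef]; simp only [if_pos hωS]
      exact lt_of_lt_of_le zero_lt_one le_top
    · rw [hXsdef]; simp only [if_neg hωS]
      exact pos_iff_ne_zero.mpr (hω hωS)
  refine ⟨Xs, hXsE, hXspos, ?_⟩
  intro Y hY
  have hsplit : ∫⁻ ω, ERatio (Y ω) (Xs ω) ∂Q
      = ∫⁻ ω in S, ERatio (Y ω) (Xs ω) ∂Q + ∫⁻ ω in Sᶜ, ERatio (Y ω) (Xs ω) ∂Q :=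
    (lintegral_add_compl _ hSmeas).symm
  have hpart1 : ∫⁻ ω in S, ERatio (Y ω) (Xs ω) ∂Q ≤ Q S := by
    calc ∫⁻ ω in S, ERatio (Y ω) (Xs ω) ∂Q ≤ ∫⁻ _ω in S, 1 ∂Q := by
          apply lintegral_mono_ae
          filter_upwards [ae_restrict_mem hSmeas] with ω hω
          rw [hXsdef]; simp only [if_pos hω]
          exact ERatio_top_le_one _
      _ = Q S := setLIntegral_one S
  have hpart2 : ∫⁻ ω in Sᶜ, ERatio (Y ω) (Xs ω) ∂Q ≤ Q Sᶜ := by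
    have heq2 : ∫⁻ ω in Sᶜ, ERatio (Y ω) (Xs ω) ∂Q = ∫⁻ ω in Sᶜ, ERatio (Y ω) (Xs' ω) ∂Q := by
      apply lintegral_congr_ae
      filter_upwards [ae_restrict_mem hSmeas.compl] with ω hω
      rw [hXsdef]; simp only [if_neg hω]
    rw [heq2]
    calc ∫⁻ ω in Sᶜ, ERatio (Y ω) (Xs' ω) ∂Q ≤ μ univ := hERatioμ Y hY
      _ = Q Sᶜ := by rw [hμ, Measure.restrict_apply_univ]
  calc ∫⁻ ω, ERatio (Y ω) (Xs ω) ∂Q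
      = ∫⁻ ω in S, ERatio (Y ω) (Xs ω) ∂Q + ∫⁻ ω in Sᶜ, ERatio (Y ω) (Xs ω) ∂Q := hsplit
    _ ≤ Q S + Q Sᶜ := add_le_add hpart1 hpart2
    _ = 1 := by rw [measure_add_measure_compl hSmeas, measure_univ]

end
end

section
/- If X*₁ and X*₂ are both numeraires (for the same 𝒫 and Q), then X*₁ = X*₂ Q-almost surely. -/
open MeasureTheory ENNReal Filter Set Topology

variable {Ω : Type*} [MeasurableSpace Ω]

/-!
Testing each numeraire against the other gives `∫ X₁/X₂ dQ ≤ 1` and `∫ X₂/X₁ dQ ≤ 1`, whereas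
pointwise `x/y + y/x ≥ 2` for positive `x, y`, with equality only when `x = y`. Hence
`X₁/X₂ + X₂/X₁ = 2` holds `Q`-almost surely, which forces `X₁ = X₂` there.
-/

theorem two_lt_div_add_div {a b : ℝ} (ha : 0 < a) (hb : 0 < b) (hab : a ≠ b) :
    2 < a / b + b / a := by
  rw [div_add_div _ _ hb.ne' ha.ne', lt_div_iff₀ (by positivity)]
  nlinarith [sq_pos_of_ne_zero (sub_ne_zero.2 hab)]

namespace ENNReal

theorem two_lt_div_add_div {x y : ℝ≥0∞} (hx₀ : x ≠ 0) (hy₀ : y ≠ 0) (hx : x ≠ ∞) (hy : y ≠ ∞)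
    (hxy : x ≠ y) : 2 < x / y + y / x := by
  lift x to NNReal using hx
  lift y to NNReal using hy
  simp only [ne_eq, coe_eq_zero, coe_inj] at hx₀ hy₀ hxy
  rw [← coe_div hy₀, ← coe_div hx₀, ← coe_add, ← coe_two, coe_lt_coe, ← NNReal.coe_lt_coe]
  push_cast
  exact _root_.two_lt_div_add_div (by positivity) (by positivity) (NNReal.coe_injective.ne hxy)

end ENNReal

theorem eRatio_of_ne_top_left {x y : ℝ≥0∞} (hx : x ≠ ∞) : ERatio x y = x / y := by
  simp [ERatio, hx]

theorem eRatio_of_ne_top_right {x y : ℝ≥0∞} (hy : y ≠ ∞) : ERatio x y = x / y := by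
  simp [ERatio, hy]

theorem eRatio_self {x : ℝ≥0∞} (hx : x ≠ 0) : ERatio x x = 1 := by
  rcases eq_or_ne x ∞ with rfl | hx'
  · simp [ERatio]
  · rw [eRatio_of_ne_top_left hx', ENNReal.div_self hx hx']

theorem two_lt_eRatio_add_eRatio {x y : ℝ≥0∞} (hx : x ≠ 0) (hy : y ≠ 0) (hxy : x ≠ y) :
    2 < ERatio x y + ERatio y x := by
  rcases eq_or_ne x ∞ with rfl | hx'
  · simp [eRatio_of_ne_top_right hxy.symm, ENNReal.top_div_of_ne_top hxy.symm]
  rcases eq_or_ne y ∞ with rfl | hy'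
  · simp [eRatio_of_ne_top_right hx', ENNReal.top_div_of_ne_top hx']
  rw [eRatio_of_ne_top_left hx', eRatio_of_ne_top_left hy']
  exact ENNReal.two_lt_div_add_div hx hy hx' hy' hxy

theorem two_le_eRatio_add_eRatio {x y : ℝ≥0∞} (hx : x ≠ 0) (hy : y ≠ 0) :
    2 ≤ ERatio x y + ERatio y x := by
  rcases eq_or_ne x y with rfl | hxy
  · rw [eRatio_self hx, one_add_one_eq_two]
  · exact (two_lt_eRatio_add_eRatio hx hy hxy).le

theorem Measurable.eRatio {X Y : Ω → ℝ≥0∞} (hX : Measurable X) (hY : Measurable Y) :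
    Measurable fun ω ↦ ERatio (X ω) (Y ω) :=
  Measurable.ite ((measurableSet_singleton ∞).preimage hX |>.inter
    ((measurableSet_singleton ∞).preimage hY)) measurable_const (hX.div hY)

theorem IsNumeraire.lintegral_eRatio_add_eRatio_le_two {Pfam : Set (Measure Ω)} {Q : Measure Ω}
    {X₁ X₂ : Ω → ℝ≥0∞} (h₁ : IsNumeraire Pfam Q X₁) (h₂ : IsNumeraire Pfam Q X₂) :
    ∫⁻ ω, (ERatio (X₁ ω) (X₂ ω) + ERatio (X₂ ω) (X₁ ω)) ∂Q ≤ 2 := by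
  rw [lintegral_add_left (h₁.1.1.eRatio h₂.1.1), ← one_add_one_eq_two]
  exact add_le_add (h₂.2.2 X₁ h₁.1) (h₁.2.2 X₂ h₂.1)

theorem numeraire_unique_general (Pfam : Set (Measure Ω))
    (Q : Measure Ω) [IsProbabilityMeasure Q]
    (Xs₁ Xs₂ : Ω → ℝ≥0∞)
    (h₁ : IsNumeraire Pfam Q Xs₁) (h₂ : IsNumeraire Pfam Q Xs₂) :
    Xs₁ =ᵐ[Q] Xs₂ := by
  have h_two_le : (fun _ ↦ 2) ≤ᵐ[Q] fun ω ↦ ERatio (Xs₁ ω) (Xs₂ ω) + ERatio (Xs₂ ω) (Xs₁ ω) := by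
    filter_upwards [h₁.2.1, h₂.2.1] with ω hω₁ hω₂
    exact two_le_eRatio_add_eRatio hω₁.ne' hω₂.ne'
  have h_eq_two := ae_eq_of_ae_le_of_lintegral_le h_two_le (by simp)
    ((h₁.1.1.eRatio h₂.1.1).add (h₂.1.1.eRatio h₁.1.1)).aemeasurable
    (by simpa using h₁.lintegral_eRatio_add_eRatio_le_two h₂)
  filter_upwards [h₁.2.1, h₂.2.1, h_eq_two] with ω hω₁ hω₂ hω
  by_contra hne
  exact (two_lt_eRatio_add_eRatio hω₁.ne' hω₂.ne' hne).ne hω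

/-- Uniqueness of the numeraire up to Q-null sets. -/
theorem numeraire_unique (Pfam : Set (Measure Ω)) (hne : Pfam.Nonempty)
    (hprob : ∀ P ∈ Pfam, IsProbabilityMeasure P)
    (Q : Measure Ω) [IsProbabilityMeasure Q]
    (Xs₁ Xs₂ : Ω → ℝ≥0∞)
    (h₁ : IsNumeraire Pfam Q Xs₁) (h₂ : IsNumeraire Pfam Q Xs₂) :
    Xs₁ =ᵐ[Q] Xs₂ :=
  numeraire_unique_general Pfam Q Xs₁ Xs₂ h₁ h₂
end

section
/- Let X* be a numeraire. Then the measure P* defined by dP*/dQ = 1/X* (taken to be 0 on {X* = ∞}) is well defined, is absolutely continuous with respect to Q, and belongs to the effective null hypothesis 𝒫_eff, i.e. ∫ X dP* ≤ 1 for every e-variable X. -/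
open MeasureTheory ENNReal Filter Set Topology

variable {Ω : Type*} [MeasurableSpace Ω]

/-- The effective null hypothesis: all finite nonnegative measures against which
every e-variable for `Pfam` has expectation at most one. -/
def Peff (Pfam : Set (Measure Ω)) : Set (Measure Ω) :=
  {P | IsFiniteMeasure P ∧ ∀ X, IsEVar Pfam X → ∫⁻ ω, X ω ∂P ≤ 1}

/-! Integrating an e-variable `X` against `P* = Q.withDensity Xs⁻¹` gives `∫ X / Xs dQ`, up to the
convention `∞/∞ = 1`, which only makes the ratio larger; so the numeraire property bounds it by one.
Testing this against the constant e-variable `1` shows that `P*` is finite. -/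

theorem mul_inv_le_eRatio (x y : ℝ≥0∞) : x * y⁻¹ ≤ ERatio x y := by
  unfold ERatio
  split_ifs with h
  · simp [h.2]
  · rw [div_eq_mul_inv]

theorem isEVar_const_one {Pfam : Set (Measure Ω)} (hprob : ∀ P ∈ Pfam, IsProbabilityMeasure P) :
    IsEVar Pfam (fun _ => 1) :=
  ⟨measurable_const, fun P hP => by
    have := hprob P hP
    simp⟩

namespace IsNumeraire

variable {Pfam : Set (Measure Ω)} {Q : Measure Ω} {Xs : Ω → ℝ≥0∞}

theorem lintegral_withDensity_inv_le_one (hXs : IsNumeraire Pfam Q Xs) {X : Ω → ℝ≥0∞}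
    (hX : IsEVar Pfam X) : ∫⁻ ω, X ω ∂(Q.withDensity fun ω => (Xs ω)⁻¹) ≤ 1 := by
  have hinv : Measurable fun ω => (Xs ω)⁻¹ := hXs.1.1.inv
  rw [lintegral_withDensity_eq_lintegral_mul Q hinv hX.1]
  calc ∫⁻ ω, (Xs ω)⁻¹ * X ω ∂Q ≤ ∫⁻ ω, ERatio (X ω) (Xs ω) ∂Q :=
        lintegral_mono fun ω => (mul_comm _ _).trans_le (mul_inv_le_eRatio _ _)
    _ ≤ 1 := hXs.2.2 X hX

theorem withDensity_inv_mem_peff (hprob : ∀ P ∈ Pfam, IsProbabilityMeasure P)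
    (hXs : IsNumeraire Pfam Q Xs) : Q.withDensity (fun ω => (Xs ω)⁻¹) ∈ Peff Pfam := by
  have hmass := hXs.lintegral_withDensity_inv_le_one (isEVar_const_one hprob)
  rw [lintegral_one] at hmass
  exact ⟨⟨hmass.trans_lt one_lt_top⟩, fun _ hX => hXs.lintegral_withDensity_inv_le_one hX⟩

end IsNumeraire

theorem ripr_mem_peff_general (Pfam : Set (Measure Ω))
    (hprob : ∀ P ∈ Pfam, IsProbabilityMeasure P)
    (Q : Measure Ω)
    (Xs : Ω → ℝ≥0∞) (hXs : IsNumeraire Pfam Q Xs) :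
    Q.withDensity (fun ω => (Xs ω)⁻¹) ≪ Q ∧
    Q.withDensity (fun ω => (Xs ω)⁻¹) ∈ Peff Pfam :=
  ⟨withDensity_absolutelyContinuous _ _, hXs.withDensity_inv_mem_peff hprob⟩

/-- The measure `P*` with density `1/Xs` w.r.t. `Q` (zero on `{Xs = ∞}`, which is
built into the `ℝ≥0∞` inverse since `⊤⁻¹ = 0`) is absolutely continuous w.r.t. `Q`
and belongs to the effective null hypothesis. -/
theorem ripr_mem_peff (Pfam : Set (Measure Ω)) (hne : Pfam.Nonempty)
    (hprob : ∀ P ∈ Pfam, IsProbabilityMeasure P)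
    (Q : Measure Ω) [IsProbabilityMeasure Q]
    (Xs : Ω → ℝ≥0∞) (hXs : IsNumeraire Pfam Q Xs) :
    Q.withDensity (fun ω => (Xs ω)⁻¹) ≪ Q ∧
    Q.withDensity (fun ω => (Xs ω)⁻¹) ∈ Peff Pfam :=
  ripr_mem_peff_general Pfam hprob Q Xs hXs
end

section
/- Assume Q ≪ 𝒫 and let P* be an element of 𝒫_eff that is equivalent to Q (mutually absolutely continuous). The following are equivalent: (1) P* is the RIPr, i.e. dP*/dQ = 1/X* where X* is the numeraire; (2) ∫ (dP^a/dP*) dQ ≤ 1 for all P ∈ 𝒫_eff; (3) ∫ log(dP^a/dP*) dQ ≤ 0 for all P ∈ 𝒫_eff. Moreover, with X* the numeraire and P* the RIPr, the strong duality ∫ log X* dQ = sup_{X∈ℰ} ∫ log X dQ = inf_{P∈𝒫_eff} H(Q∣P) = H(Q∣P*) holds, where all four quantities may simultaneously be +∞, and ∫ log X dQ is interpreted as −∞ whenever ∫ (log X)⁻ dQ = ∞. -/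
open MeasureTheory ENNReal Filter Set Topology

variable {Ω : Type*} [MeasurableSpace Ω]

/-- `Q` is absolutely continuous with respect to the family `Pfam`. -/
def ACFam (Q : Measure Ω) (Pfam : Set (Measure Ω)) : Prop :=
  ∀ A, MeasurableSet A → (∀ P ∈ Pfam, P A = 0) → Q A = 0

/-- Positive part of an extended real, as an extended nonnegative real. -/
noncomputable def EReal.posPart (x : EReal) : ℝ≥0∞ :=
  if x = ⊤ then ⊤ else ENNReal.ofReal x.toReal

/-- `∫ log f dQ`, valued in `EReal`, interpreted as `-∞` whenever the negative
part of `log f` has infinite integral. -/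
noncomputable def logInt (Q : Measure Ω) (f : Ω → ℝ≥0∞) : EReal :=
  ((∫⁻ ω, (ENNReal.log (f ω)).posPart ∂Q : ℝ≥0∞) : EReal)
    - ((∫⁻ ω, (-(ENNReal.log (f ω))).posPart ∂Q : ℝ≥0∞) : EReal)

/-- Absolutely continuous part of `P` with respect to `Q`. -/
noncomputable def acPart (P Q : Measure Ω) : Measure Ω := Q.withDensity (P.rnDeriv Q)

/-- Relative entropy `H(Q ∣ P) = ∫ -log (dP^a/dQ) dQ`. -/
noncomputable def relEnt (Q P : Measure Ω) : EReal := - logInt Q (fun ω => P.rnDeriv Q ω)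

namespace RILemmas


@[simp] lemma pp_top : EReal.posPart ⊤ = ⊤ := if_pos rfl
@[simp] lemma pp_bot : EReal.posPart ⊥ = 0 := by simp [EReal.posPart]
@[simp] lemma pp_coe (x : ℝ) : EReal.posPart (x : EReal) = ENNReal.ofReal x := by
  simp [EReal.posPart, EReal.coe_ne_top]

lemma measurable_pp : Measurable EReal.posPart := by
  unfold EReal.posPart
  refine Measurable.ite ?_ measurable_const
    (ENNReal.measurable_ofReal.comp measurable_ereal_toReal)
  exact measurableSet_eq

lemma measurable_ereal_neg : Measurable (fun x : EReal => -x) := by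
  refine EReal.measurable_of_measurable_real ?_
  simpa [← EReal.coe_neg] using (measurable_neg : Measurable (fun r : ℝ => -r)).coe_real_ereal

lemma measurable_ennlog : Measurable ENNReal.log := by
  have : ENNReal.log = fun x : ℝ≥0∞ =>
      if x = 0 then (⊥ : EReal) else if x = ⊤ then ⊤ else ((Real.log x.toReal : ℝ) : EReal) := by
    funext x; rfl
  rw [this]
  refine Measurable.ite measurableSet_eq measurable_const ?_
  refine Measurable.ite measurableSet_eq measurable_const ?_
  exact (Real.measurable_log.comp ENNReal.measurable_toReal).coe_real_ereal

lemma meas_pp_log {f : Ω → ℝ≥0∞} (hf : Measurable f) :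
    Measurable fun ω => EReal.posPart (ENNReal.log (f ω)) :=
  measurable_pp.comp (measurable_ennlog.comp hf)

lemma meas_pp_neg_log {f : Ω → ℝ≥0∞} (hf : Measurable f) :
    Measurable fun ω => EReal.posPart (-(ENNReal.log (f ω))) :=
  measurable_pp.comp (measurable_ereal_neg.comp (measurable_ennlog.comp hf))

lemma enn2real {A : ℝ≥0∞} (hA : A ≠ ⊤) : (A : EReal) = ((A.toReal : ℝ) : EReal) := by
  rw [← EReal.toReal_coe_ennreal (x := A)]
  exact (EReal.coe_toReal (by simpa using hA) (EReal.coe_ennreal_ne_bot A)).symm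

/-- main EReal-difference comparison lemma -/
lemma ediff_le_ediff {A B C D : ℝ≥0∞} (hC : C ≠ ⊤) (h : A + D ≤ B + C) :
    (A : EReal) - B ≤ (C : EReal) - D := by
  by_cases hD : D = ⊤
  · have hB : B = ⊤ := by
      by_contra hB
      exact (ENNReal.add_ne_top.2 ⟨hB, hC⟩) (top_le_iff.mp (by simpa [hD] using h))
    simp [hB, EReal.coe_ennreal_top, EReal.sub_top]
  by_cases hB : B = ⊤
  · simp [hB, EReal.coe_ennreal_top, EReal.sub_top]
  have hA : A ≠ ⊤ := by
    intro hA
    exact (ENNReal.add_ne_top.2 ⟨hB, hC⟩) (top_le_iff.mp (by simpa [hA] using h))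
  have hr : A.toReal + D.toReal ≤ B.toReal + C.toReal := by
    have := ENNReal.toReal_mono (ENNReal.add_ne_top.2 ⟨hB, hC⟩) h
    rwa [ENNReal.toReal_add hA hD, ENNReal.toReal_add hB hC] at this
  rw [enn2real hA, enn2real hB, enn2real hC, enn2real hD, ← EReal.coe_sub, ← EReal.coe_sub,
    EReal.coe_le_coe_iff]
  linarith

lemma ediff_nonpos {A B : ℝ≥0∞} (h : A ≤ B) : (A : EReal) - B ≤ 0 := by
  have := ediff_le_ediff (A := A) (B := B) (C := 0) (D := 0) (by simp) (by simpa using h)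
  simpa using this

lemma le_of_ediff_nonpos {A B : ℝ≥0∞} (hA : A ≠ ⊤) (h : (B : EReal) - A ≤ 0) : B ≤ A := by
  by_cases hB : B = ⊤
  · rw [hB, EReal.coe_ennreal_top, enn2real hA, EReal.top_sub_coe] at h
    exact absurd h (by simp)
  rw [enn2real hA, enn2real hB, ← EReal.coe_sub] at h
  have : B.toReal - A.toReal ≤ 0 := by exact_mod_cast h
  exact (ENNReal.toReal_le_toReal hB hA).mp (by linarith) |>.trans le_rfl

lemma neg_ediff {A B : ℝ≥0∞} (hA : A ≠ ⊤) : -((A : EReal) - B) = (B : EReal) - A := by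
  by_cases hB : B = ⊤
  · rw [hB, EReal.coe_ennreal_top, EReal.sub_top, enn2real hA, EReal.top_sub_coe]
    rfl
  rw [enn2real hA, enn2real hB, ← EReal.coe_sub, ← EReal.coe_sub, ← EReal.coe_neg]
  norm_num


lemma log_real {x : ℝ≥0∞} (h0 : x ≠ 0) (ht : x ≠ ⊤) :
    ENNReal.log x = ((Real.log x.toReal : ℝ) : EReal) := ENNReal.log_pos_real h0 ht

lemma ofReal_max (x : ℝ) : ENNReal.ofReal x = ENNReal.ofReal (max x 0) := by
  rcases le_total x 0 with h | h
  · rw [max_eq_right h]; simp [ENNReal.ofReal_eq_zero.2 h]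
  · rw [max_eq_left h]

lemma pp_log_le_self (x : ℝ≥0∞) : EReal.posPart (ENNReal.log x) ≤ x := by
  rcases eq_or_ne x 0 with rfl | h0
  · simp
  rcases eq_or_ne x ⊤ with rfl | ht
  · simp
  rw [log_real h0 ht, pp_coe]
  calc ENNReal.ofReal (Real.log x.toReal) ≤ ENNReal.ofReal x.toReal := by
        refine ENNReal.ofReal_le_ofReal ?_
        have hx : 0 < x.toReal := ENNReal.toReal_pos h0 ht
        nlinarith [Real.log_le_sub_one_of_pos hx]
    _ = x := ENNReal.ofReal_toReal ht

lemma pp_log_add_one_le (x : ℝ≥0∞) :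
    EReal.posPart (ENNReal.log x) + 1 ≤ EReal.posPart (-(ENNReal.log x)) + x := by
  rcases eq_or_ne x 0 with rfl | h0
  · simp
  rcases eq_or_ne x ⊤ with rfl | ht
  · simp
  have hx : 0 < x.toReal := ENNReal.toReal_pos h0 ht
  have hlog := Real.log_le_sub_one_of_pos hx
  have hx' : x = ENNReal.ofReal x.toReal := (ENNReal.ofReal_toReal ht).symm
  rw [log_real h0 ht, pp_coe, ← EReal.coe_neg, pp_coe]
  set t := x.toReal with htdef
  rw [hx']
  rcases le_total (Real.log t) 0 with hneg | hpos
  · rw [ENNReal.ofReal_eq_zero.2 hneg, zero_add, ← ENNReal.ofReal_add (by linarith) hx.le]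
    calc (1 : ℝ≥0∞) = ENNReal.ofReal 1 := by simp
      _ ≤ _ := ENNReal.ofReal_le_ofReal (by linarith)
  · rw [ENNReal.ofReal_eq_zero.2 (by linarith : -Real.log t ≤ 0), zero_add]
    calc ENNReal.ofReal (Real.log t) + 1
        = ENNReal.ofReal (Real.log t + 1) := by
          rw [ENNReal.ofReal_add hpos (by norm_num)]; simp
      _ ≤ ENNReal.ofReal t := ENNReal.ofReal_le_ofReal (by linarith)

lemma pp_triple {s : ℝ} {r t : EReal} (h : r = (s : EReal) + t) :
    EReal.posPart r + (EReal.posPart (-(s : EReal)) + EReal.posPart (-t))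
      = EReal.posPart (-r) + (EReal.posPart (s : EReal) + EReal.posPart t) := by
  induction t with
  | bot =>
    rw [EReal.add_bot] at h
    subst h
    simp [EReal.neg_bot]
  | coe u =>
    rw [← EReal.coe_add] at h
    subst h
    rw [← EReal.coe_neg, ← EReal.coe_neg, ← EReal.coe_neg]
    simp only [pp_coe]
    have hid : ∀ x : ℝ, max x 0 - max (-x) 0 = x := by
      intro x
      rcases le_total x 0 with hx | hx
      · rw [max_eq_right hx, max_eq_left (by linarith)]; ring
      · rw [max_eq_left hx, max_eq_right (by linarith)]; ring
    rw [ofReal_max (s + u), ofReal_max (-s), ofReal_max (-u), ofReal_max (-(s+u)),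
      ofReal_max s, ofReal_max u,
      ← ENNReal.ofReal_add (le_max_right _ _) (le_max_right _ _),
      ← ENNReal.ofReal_add (le_max_right _ _) (add_nonneg (le_max_right _ _) (le_max_right _ _)),
      ← ENNReal.ofReal_add (le_max_right _ _) (le_max_right _ _),
      ← ENNReal.ofReal_add (le_max_right _ _) (add_nonneg (le_max_right _ _) (le_max_right _ _))]
    congr 1
    linarith [hid (s + u), hid s, hid u]
  | top =>
    rw [EReal.coe_add_top] at h
    subst h
    simp [EReal.neg_top]


variable {Q : Measure Ω} [IsProbabilityMeasure Q]

lemma pp_ints {f : Ω → ℝ≥0∞} (hf : Measurable f) (hle : ∫⁻ ω, f ω ∂Q ≤ 1) :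
    (∫⁻ ω, EReal.posPart (ENNReal.log (f ω)) ∂Q) ≤ 1 ∧
    (∫⁻ ω, EReal.posPart (ENNReal.log (f ω)) ∂Q)
      ≤ ∫⁻ ω, EReal.posPart (-(ENNReal.log (f ω))) ∂Q := by
  have h1 : (∫⁻ ω, EReal.posPart (ENNReal.log (f ω)) ∂Q) ≤ 1 :=
    le_trans (lintegral_mono fun ω => pp_log_le_self (f ω)) hle
  refine ⟨h1, ?_⟩
  have h := lintegral_mono (μ := Q) fun ω => pp_log_add_one_le (f ω)
  rw [lintegral_add_right _ measurable_const,
    lintegral_add_left (meas_pp_neg_log hf)] at h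
  simp only [lintegral_const, measure_univ, mul_one, one_mul] at h
  have h' : (∫⁻ ω, EReal.posPart (ENNReal.log (f ω)) ∂Q) + 1
      ≤ (∫⁻ ω, EReal.posPart (-(ENNReal.log (f ω))) ∂Q) + 1 :=
    h.trans (add_le_add_right hle _)
  exact (ENNReal.add_le_add_iff_right one_ne_top).mp h'

lemma logInt_nonpos {f : Ω → ℝ≥0∞} (hf : Measurable f) (hle : ∫⁻ ω, f ω ∂Q ≤ 1) :
    logInt Q f ≤ 0 :=
  ediff_nonpos (pp_ints hf hle).2

lemma logInt_congr {f g : Ω → ℝ≥0∞} (h : f =ᵐ[Q] g) : logInt Q f = logInt Q g := by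
  have e1 : (fun ω => EReal.posPart (ENNReal.log (f ω)))
      =ᵐ[Q] fun ω => EReal.posPart (ENNReal.log (g ω)) :=
    h.mono fun ω hω => by simp [hω]
  have e2 : (fun ω => EReal.posPart (-(ENNReal.log (f ω))))
      =ᵐ[Q] fun ω => EReal.posPart (-(ENNReal.log (g ω))) :=
    h.mono fun ω hω => by simp [hω]
  unfold logInt
  rw [lintegral_congr_ae e1, lintegral_congr_ae e2]

lemma pointwise_eq_one {x : ℝ≥0∞} (h0 : x ≠ 0) (ht : x ≠ ⊤)
    (heq : EReal.posPart (-(ENNReal.log x)) + x ≤ EReal.posPart (ENNReal.log x) + 1) :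
    x = 1 := by
  have hx : 0 < x.toReal := ENNReal.toReal_pos h0 ht
  have hx' : x = ENNReal.ofReal x.toReal := (ENNReal.ofReal_toReal ht).symm
  rw [log_real h0 ht, ← EReal.coe_neg, pp_coe, pp_coe] at heq
  set t := x.toReal with htdef
  rw [hx'] at heq
  have hr : max (-Real.log t) 0 + max t 0 ≤ max (Real.log t) 0 + 1 := by
    have := ENNReal.toReal_mono (by
      exact ENNReal.add_ne_top.2 ⟨ENNReal.ofReal_ne_top, one_ne_top⟩) heq
    rwa [ENNReal.toReal_add ENNReal.ofReal_ne_top ENNReal.ofReal_ne_top,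
      ENNReal.toReal_add ENNReal.ofReal_ne_top one_ne_top, ENNReal.toReal_ofReal',
      ENNReal.toReal_ofReal', ENNReal.toReal_ofReal', ENNReal.toReal_one] at this
  rw [max_eq_left hx.le] at hr
  have ht1 : t = 1 := by
    by_contra hne
    have hlt := Real.log_lt_sub_one_of_pos hx hne
    rcases le_total (Real.log t) 0 with hneg | hpos
    · rw [max_eq_right hneg, max_eq_left (by linarith)] at hr
      linarith
    · rw [max_eq_left hpos, max_eq_right (by linarith)] at hr
      linarith
  rw [hx', ht1]
  simp

lemma eq_one_of_logInt {u : Ω → ℝ≥0∞} (hu : Measurable u)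
    (hpos : ∀ᵐ ω ∂Q, 0 < u ω) (hint : ∫⁻ ω, u ω ∂Q ≤ 1)
    (hlog : logInt Q (fun ω => (u ω)⁻¹) ≤ 0) : u =ᵐ[Q] fun _ => 1 := by
  have hA1 := (pp_ints hu hint).1
  have hAne : (∫⁻ ω, EReal.posPart (ENNReal.log (u ω)) ∂Q) ≠ ⊤ :=
    (lt_of_le_of_lt hA1 one_lt_top).ne
  -- rewrite hlog
  have hinv1 : (∫⁻ ω, EReal.posPart (ENNReal.log ((u ω)⁻¹)) ∂Q)
      = ∫⁻ ω, EReal.posPart (-(ENNReal.log (u ω))) ∂Q :=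
    lintegral_congr fun ω => by rw [ENNReal.log_inv]
  have hinv2 : (∫⁻ ω, EReal.posPart (-(ENNReal.log ((u ω)⁻¹))) ∂Q)
      = ∫⁻ ω, EReal.posPart (ENNReal.log (u ω)) ∂Q :=
    lintegral_congr fun ω => by rw [ENNReal.log_inv, neg_neg]
  unfold logInt at hlog
  rw [hinv1, hinv2] at hlog
  have hBA := le_of_ediff_nonpos hAne hlog
  -- integrals of the two sides of the pointwise inequality
  set k : Ω → ℝ≥0∞ := fun ω => EReal.posPart (ENNReal.log (u ω)) + 1 with hk
  set h : Ω → ℝ≥0∞ := fun ω => EReal.posPart (-(ENNReal.log (u ω))) + u ω with hh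
  have hkm : Measurable k := (meas_pp_log hu).add measurable_const
  have hhm : Measurable h := (meas_pp_neg_log hu).add hu
  have hkh : ∀ ω, k ω ≤ h ω := fun ω => pp_log_add_one_le (u ω)
  have hik : ∫⁻ ω, k ω ∂Q = (∫⁻ ω, EReal.posPart (ENNReal.log (u ω)) ∂Q) + 1 := by
    rw [hk, lintegral_add_right _ measurable_const]
    simp
  have hih : ∫⁻ ω, h ω ∂Q = (∫⁻ ω, EReal.posPart (-(ENNReal.log (u ω))) ∂Q)
      + ∫⁻ ω, u ω ∂Q := by
    rw [hh, lintegral_add_left (meas_pp_neg_log hu)]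
  have hkfin : ∫⁻ ω, k ω ∂Q ≠ ⊤ := by
    rw [hik]
    exact ENNReal.add_ne_top.2 ⟨hAne, one_ne_top⟩
  have hihk : ∫⁻ ω, h ω ∂Q = ∫⁻ ω, k ω ∂Q := by
    refine le_antisymm ?_ (lintegral_mono hkh)
    rw [hih, hik]
    exact add_le_add hBA hint
  have hsub : ∫⁻ ω, (h ω - k ω) ∂Q = 0 := by
    rw [lintegral_sub hkm hkfin (Filter.Eventually.of_forall hkh), hihk, tsub_self]
  have hz : (fun ω => h ω - k ω) =ᵐ[Q] 0 := by
    exact (lintegral_eq_zero_iff (hhm.sub hkm)).mp hsub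
  have hut : ∀ᵐ ω ∂Q, u ω < ⊤ := ae_lt_top hu (lt_of_le_of_lt hint one_lt_top).ne
  filter_upwards [hz, hpos, hut] with ω hωz hωp hωt
  have hle : h ω ≤ k ω := tsub_eq_zero_iff_le.mp hωz
  exact pointwise_eq_one hωp.ne' hωt.ne (by rw [hk, hh] at hle; simpa [add_comm] using hle)



/-! combination lemmas -/

lemma combine {ap an bp bn cp cn : ℝ≥0∞} (hb : bp ≠ ⊤) (hc : cp ≠ ⊤) (hcc : cp ≤ cn)
    (hid : ap + (bn + cn) = an + (bp + cp)) : (ap : EReal) - an ≤ (bp : EReal) - bn := by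
  by_cases hcn : cn = ⊤
  · have han : an = ⊤ := by
      by_contra han
      have : an + (bp + cp) ≠ ⊤ :=
        ENNReal.add_ne_top.2 ⟨han, ENNReal.add_ne_top.2 ⟨hb, hc⟩⟩
      rw [← hid, hcn] at this
      simp at this
    rw [han, EReal.coe_ennreal_top, EReal.sub_top]
    exact bot_le
  have h1 : ap + bn + cn ≤ an + bp + cn := by
    calc ap + bn + cn = ap + (bn + cn) := by ring
      _ = an + (bp + cp) := hid
      _ ≤ an + (bp + cn) := by exact add_le_add_right (add_le_add_right hcc _) _
      _ = an + bp + cn := by ring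
  exact ediff_le_ediff hb ((ENNReal.add_le_add_iff_right hcn).mp h1)

lemma combine2 {dp dn bp bn ep en : ℝ≥0∞} (hd : dp ≠ ⊤) (hdd : dp ≤ dn) (he : en ≠ ⊤)
    (hid : dp + (bn + en) = dn + (bp + ep)) : (bp : EReal) - bn ≤ (en : EReal) - ep := by
  have h1 : dp + (bp + ep) ≤ dp + (bn + en) := by
    calc dp + (bp + ep) ≤ dn + (bp + ep) := add_le_add_left hdd _
      _ = dp + (bn + en) := hid.symm
  exact ediff_le_ediff he ((ENNReal.add_le_add_iff_left hd).mp h1)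

/-! setting -/

variable {Pfam : Set (Measure Ω)} {Q : Measure Ω} [IsProbabilityMeasure Q] {Xs : Ω → ℝ≥0∞}

lemma evar_one (hprob : ∀ P ∈ Pfam, IsProbabilityMeasure P) :
    IsEVar Pfam (fun _ => (1 : ℝ≥0∞)) := by
  refine ⟨measurable_const, fun P hP => ?_⟩
  haveI := hprob P hP
  simp [lintegral_one]

lemma Xs_fin (hQP : ACFam Q Pfam) (hXsE : IsEVar Pfam Xs) : ∀ᵐ ω ∂Q, Xs ω ≠ ⊤ := by
  have hA : MeasurableSet {ω | Xs ω = ⊤} := hXsE.1 (measurableSet_singleton ⊤)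
  have hQA : Q {ω | Xs ω = ⊤} = 0 := by
    refine hQP _ hA fun P hP => ?_
    have hfin : ∀ᵐ ω ∂P, Xs ω < ⊤ :=
      ae_lt_top hXsE.1 (lt_of_le_of_lt (hXsE.2 P hP) one_lt_top).ne
    rw [ae_iff] at hfin
    refine measure_mono_null (fun ω hω => ?_) hfin
    simp only [mem_setOf_eq] at hω ⊢
    simp [hω]
  rw [ae_iff]
  simpa using hQA

lemma inv_int (hXs : IsNumeraire Pfam Q Xs) (hprob : ∀ P ∈ Pfam, IsProbabilityMeasure P) :
    ∫⁻ ω, (Xs ω)⁻¹ ∂Q ≤ 1 := by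
  have h := hXs.2.2 (fun _ => 1) (evar_one hprob)
  have he : ∀ ω, ERatio 1 (Xs ω) = (Xs ω)⁻¹ := by
    intro ω
    rw [ERatio, if_neg (by simp), one_div]
  calc ∫⁻ ω, (Xs ω)⁻¹ ∂Q = ∫⁻ ω, ERatio 1 (Xs ω) ∂Q := lintegral_congr fun ω => (he ω).symm
    _ ≤ 1 := h

lemma R_finite (hXs : IsNumeraire Pfam Q Xs) (hprob : ∀ P ∈ Pfam, IsProbabilityMeasure P) :
    IsFiniteMeasure (Q.withDensity fun ω => (Xs ω)⁻¹) := by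
  constructor
  rw [withDensity_apply _ MeasurableSet.univ, setLIntegral_univ]
  exact lt_of_le_of_lt (inv_int hXs hprob) one_lt_top

lemma ERatio_ge_mul_inv (x y : ℝ≥0∞) : x * y⁻¹ ≤ ERatio x y := by
  rw [ERatio]
  split_ifs with h
  · rcases h with ⟨rfl, rfl⟩
    simp
  · rw [div_eq_mul_inv]

lemma R_mem_Peff (hXs : IsNumeraire Pfam Q Xs) (hprob : ∀ P ∈ Pfam, IsProbabilityMeasure P) :
    (Q.withDensity fun ω => (Xs ω)⁻¹) ∈ Peff Pfam := by
  refine ⟨R_finite hXs hprob, fun X hX => ?_⟩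
  rw [show (fun ω => (Xs ω)⁻¹) = Xs⁻¹ from rfl, lintegral_withDensity_eq_lintegral_mul Q hXs.1.1.inv hX.1]
  calc ∫⁻ ω, ((fun ω => (Xs ω)⁻¹) * X) ω ∂Q ≤ ∫⁻ ω, ERatio (X ω) (Xs ω) ∂Q := by
        refine lintegral_mono fun ω => ?_
        simp only [Pi.mul_apply]
        rw [mul_comm]
        exact ERatio_ge_mul_inv _ _
    _ ≤ 1 := hXs.2.2 X hX

lemma lint_mul_Xs (hXsE : IsEVar Pfam Xs) {P : Measure Ω} (hP : P ∈ Peff Pfam) :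
    ∫⁻ ω, P.rnDeriv Q ω * Xs ω ∂Q ≤ 1 := by
  haveI := hP.1
  have e := lintegral_withDensity_eq_lintegral_mul Q (Measure.measurable_rnDeriv P Q) hXsE.1
  calc ∫⁻ ω, P.rnDeriv Q ω * Xs ω ∂Q
      = ∫⁻ ω, Xs ω ∂(Q.withDensity (P.rnDeriv Q)) := e.symm
    _ ≤ ∫⁻ ω, Xs ω ∂P := lintegral_mono' (Measure.withDensity_rnDeriv_le P Q) le_rfl
    _ ≤ 1 := hP.2 Xs hXsE

lemma Q_ac_R (hQP : ACFam Q Pfam) (hXs : IsNumeraire Pfam Q Xs) :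
    Q ≪ Q.withDensity fun ω => (Xs ω)⁻¹ := by
  refine withDensity_absolutelyContinuous' hXs.1.1.inv.aemeasurable ?_
  filter_upwards [Xs_fin hQP hXs.1] with ω hω
  simpa [ENNReal.inv_eq_zero] using hω

lemma R_rnDeriv (hXs : IsNumeraire Pfam Q Xs) :
    (Q.withDensity fun ω => (Xs ω)⁻¹).rnDeriv Q =ᵐ[Q] fun ω => (Xs ω)⁻¹ :=
  Measure.rnDeriv_withDensity Q hXs.1.1.inv

lemma Q_rnDeriv_R (hQP : ACFam Q Pfam) (hXs : IsNumeraire Pfam Q Xs) :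
    Q.rnDeriv (Q.withDensity fun ω => (Xs ω)⁻¹) =ᵐ[Q] Xs := by
  haveI : SigmaFinite (Q.withDensity fun ω => (Xs ω)⁻¹) := by
    refine SigmaFinite.withDensity_of_ne_top ?_
    filter_upwards [Xs_fin hQP hXs.1, hXs.2.1] with ω h1 h2
    simp [ENNReal.inv_ne_top, h2.ne']
  have hinv := Measure.inv_rnDeriv (Q_ac_R hQP hXs)
  simp only [Filter.EventuallyEq, Pi.inv_apply] at hinv
  filter_upwards [hinv, R_rnDeriv hXs] with ω h1 h2
  have : (Q.rnDeriv (Q.withDensity fun ω => (Xs ω)⁻¹) ω)⁻¹ = (Xs ω)⁻¹ := by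
    rw [← h2]; exact h1
  calc Q.rnDeriv (Q.withDensity fun ω => (Xs ω)⁻¹) ω
      = ((Q.rnDeriv (Q.withDensity fun ω => (Xs ω)⁻¹) ω)⁻¹)⁻¹ := (inv_inv _).symm
    _ = ((Xs ω)⁻¹)⁻¹ := by rw [this]
    _ = Xs ω := inv_inv _

/-- forward direction : the RIPr satisfies the dual integral condition. -/
lemma forward_int (hQP : ACFam Q Pfam) (hXs : IsNumeraire Pfam Q Xs)
    (hprob : ∀ P ∈ Pfam, IsProbabilityMeasure P)
    {P : Measure Ω} (hP : P ∈ Peff Pfam) :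
    ∫⁻ ω, (acPart P Q).rnDeriv (Q.withDensity fun ω => (Xs ω)⁻¹) ω ∂Q ≤ 1 := by
  haveI := hP.1
  haveI : IsFiniteMeasure (acPart P Q) :=
    isFiniteMeasure_of_le P (Measure.withDensity_rnDeriv_le P Q)
  haveI := R_finite hXs hprob
  have hQR := Q_ac_R hQP hXs
  have hmul := Measure.rnDeriv_mul_rnDeriv
    (κ := Q.withDensity fun ω => (Xs ω)⁻¹)
    (withDensity_absolutelyContinuous Q (P.rnDeriv Q) : acPart P Q ≪ Q)
  have hmulQ := hmul.filter_mono hQR.ae_le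
  have hacp : (acPart P Q).rnDeriv Q =ᵐ[Q] P.rnDeriv Q :=
    Measure.rnDeriv_withDensity Q (Measure.measurable_rnDeriv P Q)
  have h1 : (acPart P Q).rnDeriv (Q.withDensity fun ω => (Xs ω)⁻¹)
      =ᵐ[Q] fun ω => P.rnDeriv Q ω * Xs ω := by
    filter_upwards [hmulQ, hacp, Q_rnDeriv_R hQP hXs] with ω e1 e2 e3
    rw [acPart] at e2 ⊢
    rw [← e1]
    simp only [Pi.mul_apply]
    rw [e2, e3]
  rw [lintegral_congr_ae h1]
  exact lint_mul_Xs hXs.1 hP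

/-- reverse direction. -/
lemma reverse_eq (hQP : ACFam Q Pfam) (hXs : IsNumeraire Pfam Q Xs)
    (hprob : ∀ P ∈ Pfam, IsProbabilityMeasure P)
    {Ps : Measure Ω} (hPs : Ps ∈ Peff Pfam) (hac : Ps ≪ Q) (hca : Q ≪ Ps)
    (h3 : logInt Q (fun ω =>
      (acPart (Q.withDensity fun ω => (Xs ω)⁻¹) Q).rnDeriv Ps ω) ≤ 0) :
    Ps = Q.withDensity fun ω => (Xs ω)⁻¹ := by
  haveI := hPs.1
  haveI := R_finite hXs hprob
  set R := Q.withDensity fun ω => (Xs ω)⁻¹ with hRdef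
  set p := Ps.rnDeriv Q with hpdef
  -- acPart R Q = R
  have hacpR : acPart R Q = R := by
    rw [acPart, withDensity_congr_ae (R_rnDeriv hXs)]
  -- Q.rnDeriv Ps = p⁻¹ a.e.
  have hQPs : Q.rnDeriv Ps =ᵐ[Q] fun ω => (p ω)⁻¹ := by
    have hinv := Measure.inv_rnDeriv hca
    simp only [Filter.EventuallyEq, Pi.inv_apply] at hinv
    filter_upwards [hinv] with ω h1
    calc Q.rnDeriv Ps ω = ((Q.rnDeriv Ps ω)⁻¹)⁻¹ := (inv_inv _).symm
      _ = (p ω)⁻¹ := by rw [h1]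
  -- R.rnDeriv Ps = Xs⁻¹ * p⁻¹ a.e. Q
  have hmul := Measure.rnDeriv_mul_rnDeriv (κ := Ps)
    (withDensity_absolutelyContinuous Q (fun ω => (Xs ω)⁻¹) : R ≪ Q)
  have hmulQ := hmul.filter_mono hca.ae_le
  have hRP : R.rnDeriv Ps =ᵐ[Q] fun ω => (Xs ω * p ω)⁻¹ := by
    filter_upwards [hmulQ, R_rnDeriv hXs, hQPs, Xs_fin hQP hXs.1, hXs.2.1]
      with ω e1 e2 e3 hfin hpos
    show (Q.withDensity fun ω => (Xs ω)⁻¹).rnDeriv Ps ω = _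
    rw [← e1]
    simp only [Pi.mul_apply]
    rw [e2, e3, ← ENNReal.mul_inv (Or.inl hpos.ne') (Or.inl hfin)]
  set u : Ω → ℝ≥0∞ := fun ω => Xs ω * p ω with hudef
  have hum : Measurable u := hXs.1.1.mul (Measure.measurable_rnDeriv Ps Q)
  have hlog : logInt Q (fun ω => (u ω)⁻¹) ≤ 0 := by
    rw [← logInt_congr (f := fun ω => (acPart R Q).rnDeriv Ps ω) (by rw [hacpR]; exact hRP)]
    exact h3
  have hu_int : ∫⁻ ω, u ω ∂Q ≤ 1 := by
    have e := lintegral_withDensity_eq_lintegral_mul Q (Measure.measurable_rnDeriv Ps Q) hXs.1.1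
    calc ∫⁻ ω, u ω ∂Q = ∫⁻ ω, (p * Xs) ω ∂Q := lintegral_congr fun ω => mul_comm _ _
      _ = ∫⁻ ω, Xs ω ∂(Q.withDensity p) := e.symm
      _ = ∫⁻ ω, Xs ω ∂Ps := by rw [hpdef, Measure.withDensity_rnDeriv_eq Ps Q hac]
      _ ≤ 1 := hPs.2 Xs hXs.1
  have hp_pos : ∀ᵐ ω ∂Q, 0 < p ω := (Measure.rnDeriv_pos hac).filter_mono hca.ae_le
  have hu_pos : ∀ᵐ ω ∂Q, 0 < u ω := by
    filter_upwards [hp_pos, hXs.2.1] with ω h1 h2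
    exact ENNReal.mul_pos h2.ne' h1.ne'
  have hu_one := eq_one_of_logInt hum hu_pos hu_int hlog
  have hpXs : p =ᵐ[Q] fun ω => (Xs ω)⁻¹ := by
    filter_upwards [hu_one, hXs.2.1, Xs_fin hQP hXs.1] with ω h1 h2 h3
    have : Xs ω * p ω = 1 := h1
    calc p ω = (Xs ω)⁻¹ * (Xs ω * p ω) := by
          rw [← mul_assoc, ENNReal.inv_mul_cancel h2.ne' h3, one_mul]
      _ = (Xs ω)⁻¹ := by rw [this, mul_one]
  rw [← Measure.withDensity_rnDeriv_eq Ps Q hac]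
  exact withDensity_congr_ae hpXs



variable {Pfam : Set (Measure Ω)} {Q : Measure Ω} [IsProbabilityMeasure Q] {Xs : Ω → ℝ≥0∞}

/-! duality lemmas -/

lemma bneg_le_one (hQP : ACFam Q Pfam) (hXs : IsNumeraire Pfam Q Xs)
    (hprob : ∀ P ∈ Pfam, IsProbabilityMeasure P) :
    ∫⁻ ω, EReal.posPart (-(ENNReal.log (Xs ω))) ∂Q ≤ 1 := by
  calc ∫⁻ ω, EReal.posPart (-(ENNReal.log (Xs ω))) ∂Q ≤ ∫⁻ ω, (Xs ω)⁻¹ ∂Q := by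
        refine lintegral_mono fun ω => ?_
        rw [← ENNReal.log_inv]
        exact pp_log_le_self _
    _ ≤ 1 := inv_int hXs hprob

lemma ERatio_meas {X Y : Ω → ℝ≥0∞} (hX : Measurable X) (hY : Measurable Y) :
    Measurable fun ω => ERatio (X ω) (Y ω) := by
  unfold ERatio
  refine Measurable.ite ?_ measurable_const (hX.div hY)
  exact ((hX (measurableSet_singleton ⊤)).inter (hY (measurableSet_singleton ⊤)))

lemma triple_int {X T : Ω → ℝ≥0∞} (hXm : Measurable X) (hTm : Measurable T)
    (hXsm : Measurable Xs) (hfin : ∀ᵐ ω ∂Q, Xs ω ≠ ⊤) (hpos : ∀ᵐ ω ∂Q, 0 < Xs ω)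
    (heq : ∀ᵐ ω ∂Q, ENNReal.log (X ω) = ENNReal.log (Xs ω) + ENNReal.log (T ω)) :
    (∫⁻ ω, EReal.posPart (ENNReal.log (X ω)) ∂Q)
        + ((∫⁻ ω, EReal.posPart (-(ENNReal.log (Xs ω))) ∂Q)
          + ∫⁻ ω, EReal.posPart (-(ENNReal.log (T ω))) ∂Q)
      = (∫⁻ ω, EReal.posPart (-(ENNReal.log (X ω))) ∂Q)
        + ((∫⁻ ω, EReal.posPart (ENNReal.log (Xs ω)) ∂Q)
          + ∫⁻ ω, EReal.posPart (ENNReal.log (T ω)) ∂Q) := by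
  have hpt : ∀ᵐ ω ∂Q,
      EReal.posPart (ENNReal.log (X ω)) + (EReal.posPart (-(ENNReal.log (Xs ω)))
        + EReal.posPart (-(ENNReal.log (T ω))))
      = EReal.posPart (-(ENNReal.log (X ω))) + (EReal.posPart (ENNReal.log (Xs ω))
        + EReal.posPart (ENNReal.log (T ω))) := by
    filter_upwards [hfin, hpos, heq] with ω h1 h2 h3
    have hs : ENNReal.log (Xs ω) = ((Real.log (Xs ω).toReal : ℝ) : EReal) :=
      log_real h2.ne' h1
    rw [hs] at h3 ⊢
    exact pp_triple h3
  have h := lintegral_congr_ae hpt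
  rw [lintegral_add_left (meas_pp_log hXm), lintegral_add_left (meas_pp_neg_log hXsm),
    lintegral_add_left (meas_pp_neg_log hXm), lintegral_add_left (meas_pp_log hXsm)] at h
  exact h

lemma logInt_le_logInt_Xs (hQP : ACFam Q Pfam) (hXs : IsNumeraire Pfam Q Xs)
    (hprob : ∀ P ∈ Pfam, IsProbabilityMeasure P) {X : Ω → ℝ≥0∞} (hX : IsEVar Pfam X) :
    logInt Q X ≤ logInt Q Xs := by
  have hbn1 : (∫⁻ ω, EReal.posPart (-(ENNReal.log (Xs ω))) ∂Q) ≤ 1 :=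
    bneg_le_one hQP hXs hprob
  have hbn : (∫⁻ ω, EReal.posPart (-(ENNReal.log (Xs ω))) ∂Q) ≠ ⊤ :=
    (lt_of_le_of_lt hbn1 one_lt_top).ne
  unfold logInt
  by_cases hbp : (∫⁻ ω, EReal.posPart (ENNReal.log (Xs ω)) ∂Q) = ⊤
  · rw [hbp, EReal.coe_ennreal_top, enn2real hbn, EReal.top_sub_coe]
    exact le_top
  · set T : Ω → ℝ≥0∞ := fun ω => ERatio (X ω) (Xs ω) with hTdef
    have hTm : Measurable T := ERatio_meas hX.1 hXs.1.1
    have hT_int : ∫⁻ ω, T ω ∂Q ≤ 1 := hXs.2.2 X hX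
    have hcp := (pp_ints hTm hT_int).1
    have hcc := (pp_ints hTm hT_int).2
    have heq : ∀ᵐ ω ∂Q, ENNReal.log (X ω) = ENNReal.log (Xs ω) + ENNReal.log (T ω) := by
      filter_upwards [Xs_fin hQP hXs.1, hXs.2.1] with ω h1 h2
      have hT : T ω = X ω / Xs ω := by
        rw [hTdef]
        exact if_neg (by simp [h1])
      calc ENNReal.log (X ω) = ENNReal.log (T ω * Xs ω) := by
            rw [hT, ENNReal.div_mul_cancel h2.ne' h1]
        _ = ENNReal.log (T ω) + ENNReal.log (Xs ω) := ENNReal.log_mul_add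
        _ = ENNReal.log (Xs ω) + ENNReal.log (T ω) := add_comm _ _
    have hid := triple_int hX.1 hTm hXs.1.1 (Xs_fin hQP hXs.1) hXs.2.1 heq
    exact combine hbp (lt_of_le_of_lt hcp one_lt_top).ne hcc hid

lemma logInt_Xs_le_relEnt (hQP : ACFam Q Pfam) (hXs : IsNumeraire Pfam Q Xs)
    (hprob : ∀ P ∈ Pfam, IsProbabilityMeasure P) {P : Measure Ω} (hP : P ∈ Peff Pfam) :
    logInt Q Xs ≤ relEnt Q P := by
  haveI := hP.1
  set g : Ω → ℝ≥0∞ := fun ω => P.rnDeriv Q ω with hgdef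
  have hgm : Measurable g := Measure.measurable_rnDeriv P Q
  have hep : (∫⁻ ω, EReal.posPart (ENNReal.log (g ω)) ∂Q) ≠ ⊤ := by
    refine (lt_of_le_of_lt (lintegral_mono fun ω => pp_log_le_self (g ω)) ?_).ne
    exact Measure.lintegral_rnDeriv_lt_top P Q
  unfold relEnt logInt
  by_cases hen : (∫⁻ ω, EReal.posPart (-(ENNReal.log (g ω))) ∂Q) = ⊤
  · rw [hen, EReal.coe_ennreal_top, EReal.sub_top]
    simp
  · set w : Ω → ℝ≥0∞ := fun ω => g ω * Xs ω with hwdef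
    have hwm : Measurable w := hgm.mul hXs.1.1
    have hw_int : ∫⁻ ω, w ω ∂Q ≤ 1 := lint_mul_Xs hXs.1 hP
    have hdp := (pp_ints hwm hw_int).1
    have hdd := (pp_ints hwm hw_int).2
    have heq : ∀ᵐ ω ∂Q, ENNReal.log (w ω) = ENNReal.log (Xs ω) + ENNReal.log (g ω) := by
      refine Filter.Eventually.of_forall fun ω => ?_
      calc ENNReal.log (w ω) = ENNReal.log (g ω) + ENNReal.log (Xs ω) := ENNReal.log_mul_add
        _ = ENNReal.log (Xs ω) + ENNReal.log (g ω) := add_comm _ _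
    have hid := triple_int hwm hgm hXs.1.1 (Xs_fin hQP hXs.1) hXs.2.1 heq
    have key := combine2 (lt_of_le_of_lt hdp one_lt_top).ne hdd hen hid
    rw [neg_ediff hep]
    exact key

lemma relEnt_R_eq (hXs : IsNumeraire Pfam Q Xs)
    (hprob : ∀ P ∈ Pfam, IsProbabilityMeasure P) (hQP : ACFam Q Pfam) :
    relEnt Q (Q.withDensity fun ω => (Xs ω)⁻¹) = logInt Q Xs := by
  have hbn : (∫⁻ ω, EReal.posPart (-(ENNReal.log (Xs ω))) ∂Q) ≠ ⊤ :=
    (lt_of_le_of_lt (bneg_le_one hQP hXs hprob) one_lt_top).ne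
  have h1 : logInt Q (fun ω => (Q.withDensity fun ω => (Xs ω)⁻¹).rnDeriv Q ω)
      = logInt Q (fun ω => (Xs ω)⁻¹) := logInt_congr (R_rnDeriv hXs)
  unfold relEnt
  rw [h1]
  have e1 : (∫⁻ ω, EReal.posPart (ENNReal.log ((Xs ω)⁻¹)) ∂Q)
      = ∫⁻ ω, EReal.posPart (-(ENNReal.log (Xs ω))) ∂Q :=
    lintegral_congr fun ω => by rw [ENNReal.log_inv]
  have e2 : (∫⁻ ω, EReal.posPart (-(ENNReal.log ((Xs ω)⁻¹))) ∂Q)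
      = ∫⁻ ω, EReal.posPart (ENNReal.log (Xs ω)) ∂Q :=
    lintegral_congr fun ω => by rw [ENNReal.log_inv, neg_neg]
  unfold logInt
  rw [e1, e2, neg_ediff hbn]


end RILemmas

open RILemmas in
/-- Duality theorem: assuming `Q ≪ Pfam`, for `Ps ∈ Peff` equivalent to `Q`,
being the RIPr (i.e. having density `1/Xs` w.r.t. `Q`, `Xs` the numeraire) is
equivalent to the dual numeraire property and to the dual log-optimality property;
moreover strong duality holds. -/
theorem ripr_duality (Pfam : Set (Measure Ω)) (hne : Pfam.Nonempty)
    (hprob : ∀ P ∈ Pfam, IsProbabilityMeasure P)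
    (Q : Measure Ω) [IsProbabilityMeasure Q]
    (hQP : ACFam Q Pfam)
    (Xs : Ω → ℝ≥0∞) (hXs : IsNumeraire Pfam Q Xs)
    (Ps : Measure Ω) (hPs : Ps ∈ Peff Pfam) (hac : Ps ≪ Q) (hca : Q ≪ Ps) :
    ((Ps = Q.withDensity fun ω => (Xs ω)⁻¹) ↔
      ∀ P ∈ Peff Pfam, ∫⁻ ω, (acPart P Q).rnDeriv Ps ω ∂Q ≤ 1) ∧
    ((Ps = Q.withDensity fun ω => (Xs ω)⁻¹) ↔
      ∀ P ∈ Peff Pfam, logInt Q (fun ω => (acPart P Q).rnDeriv Ps ω) ≤ 0) ∧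
    (logInt Q Xs = ⨆ X ∈ {X | IsEVar Pfam X}, logInt Q X ∧
      (⨆ X ∈ {X | IsEVar Pfam X}, logInt Q X) = ⨅ P ∈ Peff Pfam, relEnt Q P ∧
      (⨅ P ∈ Peff Pfam, relEnt Q P) = relEnt Q (Q.withDensity fun ω => (Xs ω)⁻¹)) := by

  have hR := R_mem_Peff hXs hprob
  refine ⟨⟨fun h P hP => ?_, fun hAll => ?_⟩, ⟨fun h P hP => ?_, fun hAll => ?_⟩, ?_⟩
  · subst h
    exact forward_int hQP hXs hprob hP
  · exact reverse_eq hQP hXs hprob hPs hac hca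
      (logInt_nonpos (Measure.measurable_rnDeriv _ _) (hAll _ hR))
  · subst h
    exact logInt_nonpos (Measure.measurable_rnDeriv _ _) (forward_int hQP hXs hprob hP)
  · exact reverse_eq hQP hXs hprob hPs hac hca (hAll _ hR)
  · have hS12 : logInt Q Xs = ⨆ X ∈ {X | IsEVar Pfam X}, logInt Q X :=
      le_antisymm (le_iSup₂ (f := fun X (_ : X ∈ {X | IsEVar Pfam X}) => logInt Q X) Xs hXs.1)
        (iSup₂_le fun X hX => logInt_le_logInt_Xs hQP hXs hprob hX)
    have hS13 : logInt Q Xs = ⨅ P ∈ Peff Pfam, relEnt Q P :=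
      le_antisymm (le_iInf₂ fun P hP => logInt_Xs_le_relEnt hQP hXs hprob hP)
        ((iInf₂_le _ hR).trans (relEnt_R_eq hXs hprob hQP).le)
    exact ⟨hS12, hS12.symm.trans hS13, hS13.symm.trans (relEnt_R_eq hXs hprob hQP).symm⟩
end

section
/- Assume Q ≪ 𝒫. Let X* be a Q-almost surely strictly positive e-variable and let P* be the measure with density dP*/dQ = 1/X*. Then X* is a numeraire if and only if P* belongs to the effective null 𝒫_eff. Moreover, in that case ∫ X* dP* = 1, and P* is maximal in the sense that no other P ∈ 𝒫_eff equivalent to Q can satisfy P(A) ≥ P*(A) for all events A with strict inequality for some A. -/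
open MeasureTheory ENNReal Filter Set Topology

variable {Ω : Type*} [MeasurableSpace Ω]

/-- Verification theorem: assuming `Q ≪ Pfam`, a Q-a.s. strictly positive
e-variable `Xs` is a numeraire iff the measure `Ps` with `dPs/dQ = 1/Xs` lies in
the effective null; in that case `∫ Xs dPs = 1` and `Ps` is maximal among
elements of the effective null equivalent to `Q`. -/
theorem verification (Pfam : Set (Measure Ω)) (hne : Pfam.Nonempty)
    (hprob : ∀ P ∈ Pfam, IsProbabilityMeasure P)
    (Q : Measure Ω) [IsProbabilityMeasure Q]
    (hQP : ACFam Q Pfam)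
    (Xs : Ω → ℝ≥0∞) (hXsE : IsEVar Pfam Xs) (hXspos : ∀ᵐ ω ∂Q, 0 < Xs ω) :
    (IsNumeraire Pfam Q Xs ↔ Q.withDensity (fun ω => (Xs ω)⁻¹) ∈ Peff Pfam) ∧
    (IsNumeraire Pfam Q Xs →
      (∫⁻ ω, Xs ω ∂(Q.withDensity fun ω => (Xs ω)⁻¹)) = 1 ∧
      ∀ P ∈ Peff Pfam, P ≪ Q → Q ≪ P →
        (∀ A, MeasurableSet A → Q.withDensity (fun ω => (Xs ω)⁻¹) A ≤ P A) →
        P = Q.withDensity (fun ω => (Xs ω)⁻¹)) := by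
  obtain ⟨hXm, hXint⟩ := hXsE
  have hXm' : Measurable fun ω => (Xs ω)⁻¹ := hXm.inv
  set Ps := Q.withDensity (fun ω => (Xs ω)⁻¹) with hPsdef
  -- every e-variable is a.e.-Q finite
  have hae_ne_top : ∀ X, IsEVar Pfam X → ∀ᵐ ω ∂Q, X ω ≠ ⊤ := by
    intro X hX
    have hAmeas : MeasurableSet {ω | X ω = ⊤} := hX.1 (measurableSet_singleton ⊤)
    have hQ0 : Q {ω | X ω = ⊤} = 0 := by
      apply hQP _ hAmeas
      intro P hP
      have hfin : ∫⁻ ω, X ω ∂P ≠ ⊤ := ((hX.2 P hP).trans_lt one_lt_top).ne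
      have hlt := ae_lt_top hX.1 hfin
      rw [ae_iff] at hlt
      convert hlt using 2
      ext ω; simp [lt_top_iff_ne_top]
    rw [ae_iff]
    convert hQ0 using 2
    ext ω; simp
  have hint : ∀ X : Ω → ℝ≥0∞, Measurable X →
      ∫⁻ ω, X ω ∂Ps = ∫⁻ ω, (Xs ω)⁻¹ * X ω ∂Q := by
    intro X hX
    rw [hPsdef, lintegral_withDensity_eq_lintegral_mul Q hXm' hX]
    rfl
  have hratio_ge : ∀ (X : Ω → ℝ≥0∞) ω, (Xs ω)⁻¹ * X ω ≤ ERatio (X ω) (Xs ω) := by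
    intro X ω
    unfold ERatio
    split_ifs with h
    · simp [h.1, h.2]
    · rw [div_eq_mul_inv, mul_comm]
  have hratio_eq : ∀ X, IsEVar Pfam X →
      ∫⁻ ω, ERatio (X ω) (Xs ω) ∂Q = ∫⁻ ω, (Xs ω)⁻¹ * X ω ∂Q := by
    intro X hX
    apply lintegral_congr_ae
    filter_upwards [hae_ne_top X hX] with ω hω
    unfold ERatio
    rw [if_neg (fun h => hω h.1), div_eq_mul_inv, mul_comm]
  have one_evar : IsEVar Pfam (fun _ => (1 : ℝ≥0∞)) := by
    refine ⟨measurable_const, fun P hP => ?_⟩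
    haveI := hprob P hP
    simp
  have hmain : IsNumeraire Pfam Q Xs ↔ Ps ∈ Peff Pfam := by
    constructor
    · intro hN
      have hfin : Ps Set.univ ≤ 1 := by
        have h1 := hN.2.2 _ one_evar
        rw [hratio_eq _ one_evar] at h1
        calc Ps Set.univ = ∫⁻ ω, (1 : ℝ≥0∞) ∂Ps := by rw [lintegral_one]
          _ = ∫⁻ ω, (Xs ω)⁻¹ * 1 ∂Q := hint _ measurable_const
          _ ≤ 1 := h1
      refine ⟨⟨lt_of_le_of_lt hfin one_lt_top⟩, fun X hX => ?_⟩
      rw [hint X hX.1]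
      calc ∫⁻ ω, (Xs ω)⁻¹ * X ω ∂Q ≤ ∫⁻ ω, ERatio (X ω) (Xs ω) ∂Q :=
            lintegral_mono (fun ω => hratio_ge X ω)
        _ ≤ 1 := hN.2.2 X hX
    · intro hPeff
      refine ⟨⟨hXm, hXint⟩, hXspos, fun X hX => ?_⟩
      rw [hratio_eq X hX, ← hint X hX.1]
      exact hPeff.2 X hX
  refine ⟨hmain, fun hN => ?_⟩
  have hPsPeff := hmain.mp hN
  have hXs1 : ∫⁻ ω, Xs ω ∂Ps = 1 := by
    rw [hint Xs hXm]
    have hcongr : ∀ᵐ ω ∂Q, (Xs ω)⁻¹ * Xs ω = 1 := by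
      filter_upwards [hXspos, hae_ne_top Xs ⟨hXm, hXint⟩] with ω h1 h2
      exact ENNReal.inv_mul_cancel h1.ne' h2
    rw [lintegral_congr_ae hcongr, lintegral_one, measure_univ]
  refine ⟨hXs1, fun P hP hPQ hQPa hle => ?_⟩
  haveI hPsfin : IsFiniteMeasure Ps := hPsPeff.1
  haveI hPfin : IsFiniteMeasure P := hP.1
  have hPsle : Ps ≤ P := Measure.le_iff.mpr (fun s hs => hle s hs)
  have hd : P - Ps + Ps = P := Measure.sub_add_cancel_of_le hPsle
  have hintP : ∫⁻ ω, Xs ω ∂P ≤ 1 := hP.2 Xs ⟨hXm, hXint⟩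
  have hsum : ∫⁻ ω, Xs ω ∂(P - Ps) + ∫⁻ ω, Xs ω ∂Ps = ∫⁻ ω, Xs ω ∂P := by
    rw [← lintegral_add_measure, hd]
  have hzero : ∫⁻ ω, Xs ω ∂(P - Ps) = 0 := by
    have h1 : ∫⁻ ω, Xs ω ∂(P - Ps) + 1 ≤ 0 + 1 := by
      rw [zero_add, ← hXs1, hsum] at *
      exact hintP
    exact le_antisymm ((ENNReal.add_le_add_iff_right one_ne_top).mp h1) zero_le
  have hac : (P - Ps) ≪ Q :=
    (Measure.absolutelyContinuous_of_le (Measure.sub_le)).trans hPQ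
  have haezero : ∀ᵐ ω ∂(P - Ps), Xs ω = 0 := (lintegral_eq_zero_iff hXm).mp hzero
  have haepos : ∀ᵐ ω ∂(P - Ps), 0 < Xs ω := hac.ae_le hXspos
  have hfalse : ∀ᵐ ω ∂(P - Ps), False := by
    filter_upwards [haezero, haepos] with ω h0 hpos
    exact hpos.ne' h0
  have hPsub : P - Ps = 0 := by
    have := ae_iff.mp hfalse
    simp only [not_false_iff] at this
    exact Measure.measure_univ_eq_zero.mp (by simpa using this)
  rw [← hd, hPsub, zero_add]
end

section
/- Assume Q ≪ 𝒫. Let ℰ₀ be a family of measurable [0,∞]-valued functions that generates the null hypothesis in the sense that 𝒫 = {P a probability measure on (Ω, ℱ) : ∫ X dP ≤ 1 for all X ∈ ℰ₀}. Let X* be a Q-almost surely strictly positive e-variable such that ∫ (1/X*) dQ = 1 and ∫ (X/X*) dQ ≤ 1 for all X ∈ ℰ₀. Then X* is the numeraire and the RIPr belongs to 𝒫. -/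
open MeasureTheory ENNReal Filter Set Topology

variable {Ω : Type*} [MeasurableSpace Ω]

/-- If the null `Pfam` is generated by a family `E₀` of nonnegative measurable
functions, and `Xs` is a Q-a.s. positive e-variable with `∫ (1/Xs) dQ = 1` and
`∫ (X/Xs) dQ ≤ 1` for all `X ∈ E₀`, then `Xs` is the numeraire and the RIPr
(the measure with density `1/Xs` w.r.t. `Q`) belongs to `Pfam`. -/
theorem generated_null_verification (Pfam : Set (Measure Ω)) (hne : Pfam.Nonempty)
    (Q : Measure Ω) [IsProbabilityMeasure Q]
    (hQP : ACFam Q Pfam)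
    (E₀ : Set (Ω → ℝ≥0∞)) (hE₀ : ∀ X ∈ E₀, Measurable X)
    (hgen : Pfam = {P : Measure Ω | IsProbabilityMeasure P ∧ ∀ X ∈ E₀, ∫⁻ ω, X ω ∂P ≤ 1})
    (Xs : Ω → ℝ≥0∞) (hXsE : IsEVar Pfam Xs) (hXspos : ∀ᵐ ω ∂Q, 0 < Xs ω)
    (hnorm : ∫⁻ ω, (Xs ω)⁻¹ ∂Q = 1)
    (hdom : ∀ X ∈ E₀, ∫⁻ ω, ERatio (X ω) (Xs ω) ∂Q ≤ 1) :
    IsNumeraire Pfam Q Xs ∧ Q.withDensity (fun ω => (Xs ω)⁻¹) ∈ Pfam := by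
  obtain ⟨hXsMeas, hXsInt⟩ := hXsE
  have hprob : IsProbabilityMeasure (Q.withDensity (fun ω => (Xs ω)⁻¹)) := by
    constructor
    rw [withDensity_apply _ MeasurableSet.univ, setLIntegral_univ, hnorm]
  -- P* ∈ Pfam
  have hPsmem : Q.withDensity (fun ω => (Xs ω)⁻¹) ∈ Pfam := by
    rw [hgen]
    refine ⟨hprob, fun X hX => ?_⟩
    rw [lintegral_withDensity_eq_lintegral_mul Q (show Measurable (fun ω => (Xs ω)⁻¹) from hXsMeas.inv) (hE₀ X hX)]
    calc ∫⁻ ω, ((fun ω => (Xs ω)⁻¹) * X) ω ∂Q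
        ≤ ∫⁻ ω, ERatio (X ω) (Xs ω) ∂Q := by
          apply lintegral_mono
          intro ω
          simp only [Pi.mul_apply, ERatio]
          by_cases h : X ω = ⊤ ∧ Xs ω = ⊤
          · simp [h.1, h.2]
          · rw [if_neg h, ENNReal.div_eq_inv_mul]
      _ ≤ 1 := hdom X hX
  -- Q-a.e., Xs is finite
  have hfin : ∀ᵐ ω ∂Q, Xs ω ≠ ⊤ := by
    have hA : MeasurableSet {ω | Xs ω = ⊤} := hXsMeas (measurableSet_singleton ⊤)
    have hQ0 : Q {ω | Xs ω = ⊤} = 0 := by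
      apply hQP _ hA
      intro P hP
      have h1 : ∫⁻ ω, Xs ω ∂P ≠ ⊤ := ne_top_of_le_ne_top one_ne_top (hXsInt P hP)
      have := ae_lt_top hXsMeas h1
      simpa only [ae_iff, not_lt, top_le_iff] using this
    simpa only [ae_iff, not_not] using hQ0
  refine ⟨⟨⟨hXsMeas, hXsInt⟩, hXspos, fun X hX => ?_⟩, hPsmem⟩
  obtain ⟨hXm, hXint⟩ := hX
  have key : ∫⁻ ω, ERatio (X ω) (Xs ω) ∂Q
      = ∫⁻ ω, ((fun ω => (Xs ω)⁻¹) * X) ω ∂Q := by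
    apply lintegral_congr_ae
    filter_upwards [hfin] with ω hω
    simp only [Pi.mul_apply, ERatio]
    rw [if_neg (fun h => hω h.2), ENNReal.div_eq_inv_mul]
  rw [key, ← lintegral_withDensity_eq_lintegral_mul Q (show Measurable (fun ω => (Xs ω)⁻¹) from hXsMeas.inv) hXm]
  exact hXint _ hPsmem
end
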